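/- arXiv:1709.02677 — 4 statements merged into one kernel-verified Lean document; each statement's English description precedes it below -/
import Mathlib

section
/- For C^1 vector fields f₁, f₂ on an open set M ⊆ ℝⁿ, the composition of flows Ψ(t₁,t₂)(x) := exp(-t₂f₂)(exp(-t₁f₁)(exp(t₂f₂)(exp(t₁f₁)(x)))) satisfies the asymptotic formula Ψ(t₁,t₂)(x) = x + t₁t₂·[f₁,f₂](x) + o(t₁t₂) as (t₁,t₂) → (0,0), where [f₁,f₂] = Df₂·f₁ - Df₁·f₂ is the Lie bracket. -/
open Asymptotics Filter Topology

/-- The Lie bracket `[f,g](x) = Dg(x)·f(x) - Df(x)·g(x)`. -/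
noncomputable def lieBr {n : ℕ}
    (f g : EuclideanSpace ℝ (Fin n) → EuclideanSpace ℝ (Fin n)) :
    EuclideanSpace ℝ (Fin n) → EuclideanSpace ℝ (Fin n) :=
  fun x => fderiv ℝ g x (f x) - fderiv ℝ f x (g x)

/-- `φ` is the (complete) flow of the vector field `f` on `M`. -/
def IsFlowOn {n : ℕ} (M : Set (EuclideanSpace ℝ (Fin n)))
    (f : EuclideanSpace ℝ (Fin n) → EuclideanSpace ℝ (Fin n))
    (φ : ℝ → EuclideanSpace ℝ (Fin n) → EuclideanSpace ℝ (Fin n)) : Prop :=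
  ∀ x ∈ M, φ 0 x = x ∧ ∀ t : ℝ, φ t x ∈ M ∧
    HasDerivAt (fun s => φ s x) (f (φ t x)) t

/-!
Write `y = φ₁ t₁ x`, `u = φ₂ t₂ y`, `w = φ₁ (-t₁) u` and `F = φ₂ (-t₂) w`. Then
`F - x = ((y - u) - (x - w)) + ((u - w) - (y - F))`, and each bracket is the change, over the
time `t₁` resp. `t₂`, of the difference of two trajectories of a single field: of `f₁` through `x`
and through `u`, resp. of `f₂` through `y` and through `w`. Over a short time `T` such a difference
`d` changes by `T • Df(x) d` up to `o(T ‖d‖)`, by Grönwall's inequality and the strict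
differentiability of `f` at `x`. Since `u - y ≈ t₂ • f₂ x` and `u - w ≈ t₁ • f₁ x`, the brackets
are `-t₁ t₂ Df₁(x) f₂(x)` and `t₁ t₂ Df₂(x) f₁(x)` up to `o(t₁ t₂)`. All estimates are uniform
because trajectories starting near `x` stay in a small ball for short times; the flows are never
differentiated with respect to the initial point.
-/

open Set Metric
open scoped NNReal

section Trajectories

variable {E : Type*} [NormedAddCommGroup E] [NormedSpace ℝ E]

theorem norm_sub_le_mul_abs_of_hasDerivAt {γ γ' : ℝ → E} {a b C : ℝ}
    (hγ : ∀ s ∈ uIcc a b, HasDerivAt γ (γ' s) s) (hC : ∀ s ∈ uIcc a b, ‖γ' s‖ ≤ C) :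
    ‖γ b - γ a‖ ≤ C * |b - a| := by
  simpa only [Real.norm_eq_abs] using
    (convex_uIcc a b).norm_image_sub_le_of_norm_hasDerivWithin_le
      (fun s hs => (hγ s hs).hasDerivWithinAt) hC left_mem_uIcc right_mem_uIcc

variable {f : E → E} {g h : ℝ → E}

theorem hasDerivAt_comp_neg_of_trajectory (hg : ∀ t, HasDerivAt g (f (g t)) t) (t : ℝ) :
    HasDerivAt (fun τ => g (-τ)) ((-f) (g (-t))) t := by
  simpa [Function.comp_def] using (hg (-t)).scomp t (hasDerivAt_neg t)

theorem norm_trajectory_sub_le_of_le {x : E} {K r a b : ℝ} (hK₀ : 0 ≤ K)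
    (hK : ∀ z ∈ closedBall x r, ‖f z‖ < K) (hg : ∀ t, HasDerivAt g (f (g t)) t)
    (hr : ‖g a - x‖ + K * (b - a) ≤ r) :
    ∀ s ∈ Icc a b, ‖g s - g a‖ ≤ K * (s - a) := by
  have hgc : Continuous g := continuous_iff_continuousAt.2 fun t => (hg t).continuousAt
  refine image_norm_le_of_norm_deriv_right_lt_deriv_boundary' (f' := fun s => f (g s))
    (B' := fun _ => K) (hgc.sub continuous_const).continuousOn
    (fun s _ => ((hg s).sub_const (g a)).hasDerivWithinAt) (by simp) (by fun_prop)
    (fun s _ => by simpa using (((hasDerivAt_id s).sub_const a).const_mul K).hasDerivWithinAt)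
    fun s hs hbdry => hK _ ?_
  -- Barrier argument: where the bound is attained, `g s` is still in the ball, so `‖f (g s)‖ < K`.
  have hgs : ‖g s - g a‖ = K * (s - a) := hbdry
  rw [mem_closedBall, dist_eq_norm]
  calc ‖g s - x‖ ≤ ‖g s - g a‖ + ‖g a - x‖ := norm_sub_le_norm_sub_add_norm_sub _ _ _
    _ ≤ r := by nlinarith [hs.2]

theorem norm_trajectory_sub_le {x : E} {K r a b : ℝ} (hK₀ : 0 ≤ K)
    (hK : ∀ z ∈ closedBall x r, ‖f z‖ < K) (hg : ∀ t, HasDerivAt g (f (g t)) t)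
    (hr : ‖g a - x‖ + K * |b - a| ≤ r) :
    ∀ s ∈ uIcc a b, ‖g s - x‖ ≤ ‖g a - x‖ + K * |b - a| := by
  intro s hs
  suffices ‖g s - g a‖ ≤ K * |b - a| by
    linarith [norm_sub_le_norm_sub_add_norm_sub (g s) (g a) x]
  rcases le_total a b with hab | hba
  · rw [uIcc_of_le hab] at hs
    rw [abs_of_nonneg (sub_nonneg.2 hab)] at hr ⊢
    nlinarith [norm_trajectory_sub_le_of_le hK₀ hK hg hr s hs, hs.2]
  · rw [uIcc_of_ge hba] at hs
    rw [abs_of_nonpos (sub_nonpos.2 hba)] at hr ⊢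
    have hK' : ∀ z ∈ closedBall x r, ‖(-f) z‖ < K := by simpa using hK
    have := norm_trajectory_sub_le_of_le hK₀ hK' (hasDerivAt_comp_neg_of_trajectory hg)
      (by simpa [neg_add_eq_sub] using hr) (-s) ⟨neg_le_neg hs.2, neg_le_neg hs.1⟩
    simp only [neg_neg] at this
    nlinarith [hs.1]

theorem mapsTo_closedBall_of_trajectory {x : E} {K r a b : ℝ} (hK₀ : 0 ≤ K)
    (hK : ∀ z ∈ closedBall x r, ‖f z‖ < K) (hg : ∀ t, HasDerivAt g (f (g t)) t)
    (hr : ‖g a - x‖ + K * |b - a| ≤ r) : MapsTo g (uIcc a b) (closedBall x r) := fun s hs =>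
  mem_closedBall_iff_norm.2 ((norm_trajectory_sub_le hK₀ hK hg hr s hs).trans hr)

theorem norm_trajectory_sub_sub_smul_le {x : E} {K r a b : ℝ} {L : ℝ≥0} (hK₀ : 0 ≤ K)
    (hK : ∀ z ∈ closedBall x r, ‖f z‖ < K) (hf : LipschitzOnWith L f (closedBall x r))
    (hg : ∀ t, HasDerivAt g (f (g t)) t) (hr : ‖g a - x‖ + K * |b - a| ≤ r) :
    ‖g b - g a - (b - a) • f x‖ ≤ L * (‖g a - x‖ + K * |b - a|) * |b - a| := by
  have hx : x ∈ closedBall x r := mem_closedBall_self (le_trans (by positivity) hr)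
  have hγ : ∀ s, HasDerivAt (fun s => g s - (s - a) • f x) (f (g s) - f x) s := fun s => by
    simpa using (hg s).fun_sub (((hasDerivAt_id s).sub_const a).smul_const (f x))
  have := norm_sub_le_mul_abs_of_hasDerivAt (fun s _ => hγ s) fun s hs => calc
    ‖f (g s) - f x‖ ≤ L * ‖g s - x‖ :=
      lipschitzOnWith_iff_norm_sub_le.1 hf (mapsTo_closedBall_of_trajectory hK₀ hK hg hr hs) hx
    _ ≤ L * (‖g a - x‖ + K * |b - a|) := by gcongr; exact norm_trajectory_sub_le hK₀ hK hg hr s hs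
  simp only [sub_self, zero_smul, sub_zero] at this
  rwa [sub_right_comm] at this

theorem norm_sub_le_of_trajectories_of_le {S : Set E} {L : ℝ≥0} {a b : ℝ}
    (hf : LipschitzOnWith L f S) (hg : ∀ t, HasDerivAt g (f (g t)) t)
    (hh : ∀ t, HasDerivAt h (f (h t)) t) (hgS : MapsTo g (Icc a b) S) (hhS : MapsTo h (Icc a b) S)
    (hab : a ≤ b) : ‖g b - h b‖ ≤ ‖g a - h a‖ * Real.exp (L * (b - a)) := by
  simpa only [dist_eq_norm] using dist_le_of_trajectories_ODE_of_mem (v := fun _ => f)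
    (s := fun _ => S) (fun _ _ => hf)
    (continuous_iff_continuousAt.2 fun t => (hg t).continuousAt).continuousOn
    (fun t _ => (hg t).hasDerivWithinAt) (fun t ht => hgS (Ico_subset_Icc_self ht))
    (continuous_iff_continuousAt.2 fun t => (hh t).continuousAt).continuousOn
    (fun t _ => (hh t).hasDerivWithinAt) (fun t ht => hhS (Ico_subset_Icc_self ht))
    (dist_eq_norm _ _).le b (right_mem_Icc.2 hab)

theorem norm_sub_le_of_trajectories {S : Set E} {L : ℝ≥0} {a b : ℝ}
    (hf : LipschitzOnWith L f S) (hg : ∀ t, HasDerivAt g (f (g t)) t)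
    (hh : ∀ t, HasDerivAt h (f (h t)) t) (hgS : MapsTo g (uIcc a b) S)
    (hhS : MapsTo h (uIcc a b) S) : ‖g b - h b‖ ≤ ‖g a - h a‖ * Real.exp (L * |b - a|) := by
  rcases le_total a b with hab | hba
  · rw [uIcc_of_le hab] at hgS hhS
    rw [abs_of_nonneg (sub_nonneg.2 hab)]
    exact norm_sub_le_of_trajectories_of_le hf hg hh hgS hhS hab
  · rw [uIcc_of_ge hba] at hgS hhS
    rw [abs_sub_comm, abs_of_nonneg (sub_nonneg.2 hba)]
    have hreflect : ∀ {γ : ℝ → E}, MapsTo γ (Icc b a) S →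
        MapsTo (fun τ => γ (-τ)) (Icc (-a) (-b)) S := fun hγ s hs => hγ ⟨le_neg_of_le_neg hs.2, neg_le.1 hs.1⟩
    simpa [neg_add_eq_sub] using norm_sub_le_of_trajectories_of_le (lipschitzOnWith_neg_iff.2 hf)
      (hasDerivAt_comp_neg_of_trajectory hg) (hasDerivAt_comp_neg_of_trajectory hh)
      (hreflect hgS) (hreflect hhS) (neg_le_neg hba)

theorem norm_sub_sub_le_of_trajectories {S : Set E} {L : ℝ≥0} {a b : ℝ}
    (hf : LipschitzOnWith L f S) (hg : ∀ t, HasDerivAt g (f (g t)) t)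
    (hh : ∀ t, HasDerivAt h (f (h t)) t) (hgS : MapsTo g (uIcc a b) S)
    (hhS : MapsTo h (uIcc a b) S) :
    ‖(g b - h b) - (g a - h a)‖ ≤ L * (‖g a - h a‖ * Real.exp (L * |b - a|)) * |b - a| := by
  refine norm_sub_le_mul_abs_of_hasDerivAt (fun s _ => (hg s).sub (hh s)) fun s hs => ?_
  have hsub := uIcc_subset_uIcc_left hs
  calc ‖f (g s) - f (h s)‖ ≤ L * ‖g s - h s‖ :=
        lipschitzOnWith_iff_norm_sub_le.1 hf (hgS hs) (hhS hs)
    _ ≤ L * (‖g a - h a‖ * Real.exp (L * |s - a|)) := by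
        gcongr
        exact norm_sub_le_of_trajectories hf hg hh (hgS.mono_left hsub) (hhS.mono_left hsub)
    _ ≤ L * (‖g a - h a‖ * Real.exp (L * |b - a|)) := by
        gcongr L * (_ * Real.exp (_ * ?_)); exact abs_sub_left_of_mem_uIcc hs

theorem norm_sub_sub_sub_smul_le_of_trajectories {S : Set E} {A : E →L[ℝ] E} {ε L : ℝ≥0}
    {a b : ℝ} (hfA : ApproximatesLinearOn f A S ε) (hf : LipschitzOnWith L f S)
    (hg : ∀ t, HasDerivAt g (f (g t)) t) (hh : ∀ t, HasDerivAt h (f (h t)) t)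
    (hgS : MapsTo g (uIcc a b) S) (hhS : MapsTo h (uIcc a b) S) :
    ‖(g b - h b) - (g a - h a) - (b - a) • A (g a - h a)‖
      ≤ (ε + ‖A‖ * L * |b - a|) * Real.exp (L * |b - a|) * ‖g a - h a‖ * |b - a| := by
  set d := g a - h a
  set Λ := Real.exp (L * |b - a|)
  have hγ : ∀ s, HasDerivAt (fun s => (g s - h s) - (s - a) • A d) (f (g s) - f (h s) - A d) s :=
    fun s => by
      simpa using ((hg s).sub (hh s)).fun_sub (((hasDerivAt_id s).sub_const a).smul_const (A d))
  have hbound : ∀ s ∈ uIcc a b,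
      ‖f (g s) - f (h s) - A d‖ ≤ (ε + ‖A‖ * L * |b - a|) * Λ * ‖d‖ := fun s hs => by
    have hsub := uIcc_subset_uIcc_left hs
    have hsa := abs_sub_left_of_mem_uIcc hs
    have hΛ : Real.exp (L * |s - a|) ≤ Λ := Real.exp_le_exp.2 (by gcongr)
    have hgs : ‖g s - h s‖ ≤ ‖d‖ * Λ := by
      refine (norm_sub_le_of_trajectories hf hg hh (hgS.mono_left hsub)
        (hhS.mono_left hsub)).trans ?_
      gcongr
    have hds : ‖(g s - h s) - d‖ ≤ L * (‖d‖ * Λ) * |b - a| := by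
      refine (norm_sub_sub_le_of_trajectories hf hg hh (hgS.mono_left hsub)
        (hhS.mono_left hsub)).trans ?_
      gcongr
    calc ‖f (g s) - f (h s) - A d‖
        = ‖(f (g s) - f (h s) - A (g s - h s)) + A ((g s - h s) - d)‖ := by
          rw [map_sub A (g s - h s) d]; abel_nf
      _ ≤ ε * ‖g s - h s‖ + ‖A‖ * ‖(g s - h s) - d‖ :=
          norm_add_le_of_le (hfA _ (hgS hs) _ (hhS hs)) (A.le_opNorm _)
      _ ≤ ε * (‖d‖ * Λ) + ‖A‖ * (L * (‖d‖ * Λ) * |b - a|) := by gcongr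
      _ = (ε + ‖A‖ * L * |b - a|) * Λ * ‖d‖ := by ring
  have := norm_sub_le_mul_abs_of_hasDerivAt (fun s _ => hγ s) hbound
  simp only [sub_self, zero_smul, sub_zero] at this
  rwa [sub_right_comm] at this

theorem norm_sub_sub_sub_smul_le_of_trajectories_of_approx {S : Set E} {A : E →L[ℝ] E}
    {ε L : ℝ≥0} {T σ η : ℝ} {v : E} (hfA : ApproximatesLinearOn f A S ε)
    (hf : LipschitzOnWith L f S) (hg : ∀ t, HasDerivAt g (f (g t)) t)
    (hh : ∀ t, HasDerivAt h (f (h t)) t) (hgS : MapsTo g (uIcc 0 T) S)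
    (hhS : MapsTo h (uIcc 0 T) S) (hv : ‖(g T - h T) - σ • v‖ ≤ η * |σ|) :
    ‖(g T - h T) - (g 0 - h 0) - (T * σ) • A v‖
      ≤ ((ε + 2 * ‖A‖ * L * |T|) * Real.exp (L * |T|) ^ 2 * (‖v‖ + η) + ‖A‖ * η)
        * (|T| * |σ|) := by
  set d₀ := g 0 - h 0
  set d := g T - h T
  set Λ := Real.exp (L * |T|)
  -- Grönwall's inequality, run backwards from `T` to `0`
  have hd₀ : ‖d₀‖ ≤ Λ * ((‖v‖ + η) * |σ|) := by
    rw [uIcc_comm] at hgS hhS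
    have hd : ‖d‖ ≤ (‖v‖ + η) * |σ| := calc
      ‖d‖ ≤ ‖d - σ • v‖ + ‖σ • v‖ := norm_le_norm_sub_add d (σ • v)
      _ ≤ η * |σ| + |σ| * ‖v‖ := by rw [norm_smul, Real.norm_eq_abs]; gcongr
      _ = (‖v‖ + η) * |σ| := by ring
    have := norm_sub_le_of_trajectories hf hg hh hgS hhS
    rw [zero_sub, abs_neg] at this
    exact this.trans (by rw [mul_comm]; gcongr)
  have hlin := norm_sub_sub_sub_smul_le_of_trajectories hfA hf hg hh hgS hhS
  have hdrift := norm_sub_sub_le_of_trajectories hf hg hh hgS hhS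
  simp only [sub_zero] at hlin hdrift
  calc ‖d - d₀ - (T * σ) • A v‖
      = ‖(d - d₀ - T • A d₀) - T • A (d - d₀) + T • A (d - σ • v)‖ := by
        congr 1; simp only [map_sub, map_smul, smul_sub, mul_smul]; abel
    _ ≤ ‖d - d₀ - T • A d₀‖ + |T| * (‖A‖ * ‖d - d₀‖) + |T| * (‖A‖ * ‖d - σ • v‖) := by
        refine (norm_add_le _ _).trans (add_le_add_left (norm_sub_le _ _) _) |>.trans ?_
        simp only [norm_smul, Real.norm_eq_abs]
        gcongr <;> exact A.le_opNorm _
    _ ≤ (ε + ‖A‖ * L * |T|) * Λ * ‖d₀‖ * |T| + |T| * (‖A‖ * (L * (‖d₀‖ * Λ) * |T|))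
          + |T| * (‖A‖ * (η * |σ|)) := by gcongr
    _ = (ε + 2 * ‖A‖ * L * |T|) * Λ * |T| * ‖d₀‖ + ‖A‖ * η * (|T| * |σ|) := by ring
    _ ≤ (ε + 2 * ‖A‖ * L * |T|) * Λ * |T| * (Λ * ((‖v‖ + η) * |σ|)) + ‖A‖ * η * (|T| * |σ|) := by
        gcongr
    _ = _ := by ring

end Trajectories

theorem mem_closedBall_of_norm_sub_add_le {E : Type*} [SeminormedAddCommGroup E] {x y : E}
    {c r : ℝ} (hc : 0 ≤ c) (h : ‖y - x‖ + c ≤ r) : y ∈ closedBall x r :=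
  mem_closedBall_iff_norm.2 (le_of_add_le_of_nonneg_left h hc)

section Flows

variable {E : Type*} [NormedAddCommGroup E] [NormedSpace ℝ E]

/-- Unlike `IsFlowOn`, the set `S` need not be invariant under `φ`. -/
def IsFlowThrough (f : E → E) (φ : ℝ → E → E) (S : Set E) : Prop :=
  ∀ y ∈ S, φ 0 y = y ∧ ∀ t, HasDerivAt (fun s => φ s y) (f (φ t y)) t

namespace IsFlowThrough

variable {f : E → E} {φ : ℝ → E → E} {x y z : E} {K r T : ℝ}

theorem mono {S S' : Set E} (hφ : IsFlowThrough f φ S) (hS : S' ⊆ S) : IsFlowThrough f φ S' :=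
  fun y hy => hφ y (hS hy)

theorem norm_sub_le (hφ : IsFlowThrough f φ (closedBall x r)) (hK₀ : 0 ≤ K)
    (hK : ∀ z ∈ closedBall x r, ‖f z‖ < K) (hy : ‖y - x‖ + K * |T| ≤ r) :
    ‖φ T y - x‖ ≤ ‖y - x‖ + K * |T| := by
  obtain ⟨hy₀, hyφ⟩ := hφ y (mem_closedBall_of_norm_sub_add_le (by positivity) hy)
  simpa [hy₀] using norm_trajectory_sub_le hK₀ hK hyφ (a := 0) (b := T)
    (by rwa [hy₀, sub_zero]) T right_mem_uIcc

theorem mapsTo (hφ : IsFlowThrough f φ (closedBall x r)) (hK₀ : 0 ≤ K)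
    (hK : ∀ z ∈ closedBall x r, ‖f z‖ < K) (hy : ‖y - x‖ + K * |T| ≤ r) :
    MapsTo (fun s => φ s y) (uIcc 0 T) (closedBall x r) := by
  obtain ⟨hy₀, hyφ⟩ := hφ y (mem_closedBall_of_norm_sub_add_le (by positivity) hy)
  exact mapsTo_closedBall_of_trajectory hK₀ hK hyφ (by simpa [hy₀] using hy)

theorem mapsTo_comp_sub (hφ : IsFlowThrough f φ (closedBall x r)) (hK₀ : 0 ≤ K)
    (hK : ∀ z ∈ closedBall x r, ‖f z‖ < K) (hy : ‖y - x‖ + K * |T| ≤ r) :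
    MapsTo (fun s => φ (s - T) y) (uIcc 0 T) (closedBall x r) := by
  obtain ⟨hy₀, hyφ⟩ := hφ y (mem_closedBall_of_norm_sub_add_le (by positivity) hy)
  rw [uIcc_comm]
  exact mapsTo_closedBall_of_trajectory hK₀ hK (fun t => (hyφ (t - T)).comp_sub_const t T)
    (by simpa [hy₀] using hy)

theorem norm_sub_sub_smul_le {L : ℝ≥0} (hφ : IsFlowThrough f φ (closedBall x r)) (hK₀ : 0 ≤ K)
    (hK : ∀ z ∈ closedBall x r, ‖f z‖ < K) (hL : LipschitzOnWith L f (closedBall x r))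
    (hy : ‖y - x‖ + K * |T| ≤ r) :
    ‖φ T y - y - T • f x‖ ≤ L * (‖y - x‖ + K * |T|) * |T| := by
  obtain ⟨hy₀, hyφ⟩ := hφ y (mem_closedBall_of_norm_sub_add_le (by positivity) hy)
  simpa [hy₀] using norm_trajectory_sub_sub_smul_le hK₀ hK hL hyφ (a := 0) (b := T)
    (by rwa [hy₀, sub_zero])

theorem norm_sub_sub_add_smul_le {A : E →L[ℝ] E} {ε L : ℝ≥0} {σ η : ℝ} {v : E}
    (hφ : IsFlowThrough f φ (closedBall x r)) (hK₀ : 0 ≤ K)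
    (hK : ∀ z ∈ closedBall x r, ‖f z‖ < K) (hA : ApproximatesLinearOn f A (closedBall x r) ε)
    (hL : LipschitzOnWith L f (closedBall x r)) (hy : ‖y - x‖ + K * |T| ≤ r)
    (hz : ‖z - x‖ + K * |T| ≤ r) (hv : ‖(z - φ T y) - σ • v‖ ≤ η * |σ|) :
    ‖(φ T y - z) - (y - φ (-T) z) + (T * σ) • A v‖
      ≤ ((ε + 2 * ‖A‖ * L * |T|) * Real.exp (L * |T|) ^ 2 * (‖v‖ + η) + ‖A‖ * η)
        * (|T| * |σ|) := by
  obtain ⟨hy₀, hyφ⟩ := hφ y (mem_closedBall_of_norm_sub_add_le (by positivity) hy)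
  obtain ⟨hz₀, hzφ⟩ := hφ z (mem_closedBall_of_norm_sub_add_le (by positivity) hz)
  have hv' : ‖(φ T y - φ (T - T) z) - (-σ) • v‖ ≤ η * |-σ| := by
    rw [sub_self, hz₀, abs_neg]
    calc ‖φ T y - z - (-σ) • v‖ = ‖z - φ T y - σ • v‖ := by
          rw [← norm_neg]; congr 1; rw [neg_smul]; abel
      _ ≤ η * |σ| := hv
  have := norm_sub_sub_sub_smul_le_of_trajectories_of_approx hA hL hyφ
    (fun t => (hzφ (t - T)).comp_sub_const t T) (hφ.mapsTo hK₀ hK hy)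
    (hφ.mapsTo_comp_sub hK₀ hK hz) hv'
  simp only [sub_self, zero_sub, hy₀, hz₀, mul_neg, neg_smul, sub_neg_eq_add, abs_neg] at this
  exact this

end IsFlowThrough

theorem commutator_error_coeff_le {K δ a T ν R : ℝ} {ε L : ℝ≥0} (hK₀ : 0 ≤ K)
    (hLδ : L * δ ≤ 1) (ha : a ≤ L) (hT : |T| ≤ δ) (hν₀ : 0 ≤ ν) (hν : ν ≤ K)
    (hR₀ : 0 ≤ R) (hR : R ≤ 4 * K * δ) :
    (ε + 2 * a * L * |T|) * Real.exp (L * |T|) ^ 2 * (ν + L * R) + a * (L * R)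
      ≤ 94 * K * (ε + L ^ 2 * δ) := by
  have hδ : 0 ≤ δ := (abs_nonneg _).trans hT
  have hΛ : Real.exp (L * |T|) ≤ 3 := by
    refine (Real.exp_le_exp.2 (le_trans ?_ hLδ)).trans (Real.exp_one_lt_d9.le.trans (by norm_num))
    gcongr
  have hLR : L * R ≤ 4 * K := by
    calc L * R ≤ L * (4 * K * δ) := by gcongr
      _ = 4 * K * (L * δ) := by ring
      _ ≤ 4 * K * 1 := by gcongr
      _ = 4 * K := mul_one _
  calc (ε + 2 * a * L * |T|) * Real.exp (L * |T|) ^ 2 * (ν + L * R) + a * (L * R)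
      ≤ (ε + 2 * L * L * δ) * 3 ^ 2 * (K + 4 * K) + L * (L * (4 * K * δ)) := by gcongr
    _ = 45 * K * ε + 94 * K * (L ^ 2 * δ) := by ring
    _ ≤ 94 * K * (ε + L ^ 2 * δ) := by nlinarith [mul_nonneg hK₀ ε.2]

theorem norm_flow_commutator_sub_le {f₁ f₂ : E → E} {A₁ A₂ : E →L[ℝ] E}
    {φ₁ φ₂ : ℝ → E → E} {x : E} {ρ K δ t₁ t₂ : ℝ} {ε L : ℝ≥0} (hρ : 0 ≤ ρ)
    (hφ₁ : IsFlowThrough f₁ φ₁ (closedBall x ρ)) (hφ₂ : IsFlowThrough f₂ φ₂ (closedBall x ρ))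
    (hK₁ : ∀ z ∈ closedBall x ρ, ‖f₁ z‖ < K) (hK₂ : ∀ z ∈ closedBall x ρ, ‖f₂ z‖ < K)
    (hA₁ : ApproximatesLinearOn f₁ A₁ (closedBall x ρ) ε)
    (hA₂ : ApproximatesLinearOn f₂ A₂ (closedBall x ρ) ε)
    (hL₁ : ‖A₁‖₊ + ε ≤ L) (hL₂ : ‖A₂‖₊ + ε ≤ L)
    (hδρ : 4 * K * δ ≤ ρ) (hLδ : L * δ ≤ 1) (ht₁ : |t₁| ≤ δ) (ht₂ : |t₂| ≤ δ) :
    ‖φ₂ (-t₂) (φ₁ (-t₁) (φ₂ t₂ (φ₁ t₁ x))) - x - (t₁ * t₂) • (A₂ (f₁ x) - A₁ (f₂ x))‖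
      ≤ 188 * K * (ε + L ^ 2 * δ) * (|t₁| * |t₂|) := by
  have hx : x ∈ closedBall x ρ := mem_closedBall_self hρ
  have hK₀ : 0 ≤ K := (norm_nonneg _).trans (hK₁ x hx).le
  have hδ : 0 ≤ δ := (abs_nonneg _).trans ht₁
  have hKδ : 0 ≤ K * δ := mul_nonneg hK₀ hδ
  have hKt₁ : K * |t₁| ≤ K * δ := by gcongr
  have hKt₂ : K * |t₂| ≤ K * δ := by gcongr
  have hAL : ∀ {A : E →L[ℝ] E}, ‖A‖₊ + ε ≤ L → ‖A‖ ≤ L := fun h =>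
    NNReal.coe_le_coe.2 (le_self_add.trans h)
  have hLip₁ : LipschitzOnWith L f₁ (closedBall x ρ) :=
    (lipschitzOnWith_iff_restrict.2 hA₁.lipschitz).weaken hL₁
  have hLip₂ : LipschitzOnWith L f₂ (closedBall x ρ) :=
    (lipschitzOnWith_iff_restrict.2 hA₂.lipschitz).weaken hL₂
  set y := φ₁ t₁ x
  set u := φ₂ t₂ y
  set w := φ₁ (-t₁) u
  have hyx : ‖y - x‖ ≤ K * |t₁| := by
    simpa using hφ₁.norm_sub_le hK₀ hK₁ (y := x) (T := t₁) (by simp; linarith)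
  have hux : ‖u - x‖ ≤ ‖y - x‖ + K * |t₂| := hφ₂.norm_sub_le hK₀ hK₂ (by linarith)
  have hwx : ‖w - x‖ ≤ ‖u - x‖ + K * |t₁| := by
    simpa using hφ₁.norm_sub_le hK₀ hK₁ (T := -t₁) (by rw [abs_neg]; linarith)
  have half₁ := hφ₁.norm_sub_sub_add_smul_le (y := x) (z := u) (T := t₁) (σ := t₂) hK₀ hK₁ hA₁
    hLip₁ (by simp; linarith) (by linarith) (hφ₂.norm_sub_sub_smul_le hK₀ hK₂ hLip₂ (by linarith))
  have half₂ := hφ₂.norm_sub_sub_add_smul_le (y := y) (z := w) (T := t₂) (σ := -t₁) hK₀ hK₂ hA₂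
    hLip₂ (by linarith) (by linarith)
    (hφ₁.norm_sub_sub_smul_le hK₀ hK₁ hLip₁ (T := -t₁) (by rw [abs_neg]; linarith))
  calc _ = ‖((y - u) - (x - w) + (t₁ * t₂) • A₁ (f₂ x))
        + ((u - w) - (y - φ₂ (-t₂) w) + (t₂ * -t₁) • A₂ (f₁ x))‖ := by
        congr 1; simp only [smul_sub, mul_neg, neg_smul, mul_comm t₂ t₁]; abel
    _ ≤ 94 * K * (ε + L ^ 2 * δ) * (|t₁| * |t₂|) + 94 * K * (ε + L ^ 2 * δ) * (|t₂| * |-t₁|) :=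
        norm_add_le_of_le
          (half₁.trans (by
            gcongr
            exact commutator_error_coeff_le hK₀ hLδ (hAL hL₁) ht₁ (norm_nonneg _)
              (hK₂ x hx).le (by positivity) (by linarith)))
          (half₂.trans (by
            gcongr
            exact commutator_error_coeff_le hK₀ hLδ (hAL hL₂) ht₂ (norm_nonneg _)
              (hK₁ x hx).le (by positivity) (by rw [abs_neg]; linarith)))
    _ = 188 * K * (ε + L ^ 2 * δ) * (|t₁| * |t₂|) := by rw [abs_neg]; ring

theorem flow_commutator_sub_isLittleO {f₁ f₂ : E → E} {A₁ A₂ : E →L[ℝ] E}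
    {φ₁ φ₂ : ℝ → E → E} {x : E} {N : Set E} (hN : N ∈ 𝓝 x)
    (hφ₁ : IsFlowThrough f₁ φ₁ N) (hφ₂ : IsFlowThrough f₂ φ₂ N)
    (hf₁ : HasStrictFDerivAt f₁ A₁ x) (hf₂ : HasStrictFDerivAt f₂ A₂ x) :
    (fun p : ℝ × ℝ => φ₂ (-p.2) (φ₁ (-p.1) (φ₂ p.2 (φ₁ p.1 x))) - x
        - (p.1 * p.2) • (A₂ (f₁ x) - A₁ (f₂ x))) =o[𝓝 0] fun p => p.1 * p.2 := by
  refine isLittleO_iff.2 fun c hc => ?_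
  -- `ε` and `δ` are chosen so that both terms of `188 * K * (ε + L ^ 2 * δ)` are at most `c / 2`.
  obtain ⟨K, hfK₁, hfK₂⟩ : ∃ K, ‖f₁ x‖ < K ∧ ‖f₂ x‖ < K :=
    ⟨max ‖f₁ x‖ ‖f₂ x‖ + 1, by linarith [le_max_left ‖f₁ x‖ ‖f₂ x‖],
      by linarith [le_max_right ‖f₁ x‖ ‖f₂ x‖]⟩
  have hK : 0 < K := (norm_nonneg _).trans_lt hfK₁
  obtain ⟨ε, hεc⟩ : ∃ ε : ℝ≥0, (ε : ℝ) = c / (376 * K) := ⟨⟨c / (376 * K), by positivity⟩, rfl⟩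
  have hε : 0 < ε := NNReal.coe_pos.1 (by rw [hεc]; positivity)
  obtain ⟨L, hL₁, hL₂, hL⟩ : ∃ L : ℝ≥0, ‖A₁‖₊ + ε ≤ L ∧ ‖A₂‖₊ + ε ≤ L ∧ (0 : ℝ) < L :=
    ⟨‖A₁‖₊ + ‖A₂‖₊ + ε, by gcongr; exact le_self_add, by gcongr; exact le_add_self,
      NNReal.coe_pos.2 (hε.trans_le le_add_self)⟩
  obtain ⟨s₁, hs₁, hA₁⟩ := hf₁.approximates_deriv_on_nhds (Or.inr hε)
  obtain ⟨s₂, hs₂, hA₂⟩ := hf₂.approximates_deriv_on_nhds (Or.inr hε)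
  have hK₁ : ∀ᶠ z in 𝓝 x, ‖f₁ z‖ < K := hf₁.continuousAt.norm.eventually (gt_mem_nhds hfK₁)
  have hK₂ : ∀ᶠ z in 𝓝 x, ‖f₂ z‖ < K := hf₂.continuousAt.norm.eventually (gt_mem_nhds hfK₂)
  obtain ⟨ρ, hρ, hρN⟩ := nhds_basis_closedBall.mem_iff.1
    (inter_mem (inter_mem hN (inter_mem hs₁ hs₂)) (hK₁.and hK₂))
  set δ := min (ρ / (4 * K)) (min (1 / L) (c / (376 * K * L ^ 2)))
  have hδ : 0 < δ := by positivity
  have hδρ : 4 * K * δ ≤ ρ := (le_div_iff₀' (by positivity)).1 (min_le_left _ _)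
  have hLδ : L * δ ≤ 1 := (le_div_iff₀' hL).1 ((min_le_right _ _).trans (min_le_left _ _))
  have hδc : 376 * K * L ^ 2 * δ ≤ c :=
    (le_div_iff₀' (by positivity)).1 ((min_le_right _ _).trans (min_le_right _ _))
  filter_upwards [closedBall_mem_nhds (0 : ℝ × ℝ) hδ] with p hpδ
  have hp : ‖p‖ ≤ δ := mem_closedBall_zero_iff.1 hpδ
  calc _ ≤ 188 * K * (ε + L ^ 2 * δ) * (|p.1| * |p.2|) :=
        norm_flow_commutator_sub_le hρ.le (hφ₁.mono fun z hz => (hρN hz).1.1)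
          (hφ₂.mono fun z hz => (hρN hz).1.1) (fun z hz => (hρN hz).2.1)
          (fun z hz => (hρN hz).2.2) (hA₁.mono_set fun z hz => (hρN hz).1.2.1)
          (hA₂.mono_set fun z hz => (hρN hz).1.2.2) hL₁ hL₂ hδρ hLδ ((norm_fst_le p).trans hp)
          ((norm_snd_le p).trans hp)
    _ ≤ c * ‖p.1 * p.2‖ := by
        rw [norm_mul, Real.norm_eq_abs, Real.norm_eq_abs]
        gcongr
        have : 188 * K * (ε : ℝ) = c / 2 := by rw [hεc]; field_simp; ring
        nlinarith

end Flows

theorem IsFlowOn.isFlowThrough {n : ℕ} {M : Set (EuclideanSpace ℝ (Fin n))}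
    {f : EuclideanSpace ℝ (Fin n) → EuclideanSpace ℝ (Fin n)}
    {φ : ℝ → EuclideanSpace ℝ (Fin n) → EuclideanSpace ℝ (Fin n)} (hφ : IsFlowOn M f φ) :
    IsFlowThrough f φ M :=
  fun y hy => ⟨(hφ y hy).1, fun t => ((hφ y hy).2 t).2⟩

theorem stmt0 {n : ℕ} (M : Set (EuclideanSpace ℝ (Fin n))) (hM : IsOpen M)
    (f₁ f₂ : EuclideanSpace ℝ (Fin n) → EuclideanSpace ℝ (Fin n))
    (hf₁ : ContDiffOn ℝ 1 f₁ M) (hf₂ : ContDiffOn ℝ 1 f₂ M)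
    (φ₁ φ₂ : ℝ → EuclideanSpace ℝ (Fin n) → EuclideanSpace ℝ (Fin n))
    (hφ₁ : IsFlowOn M f₁ φ₁) (hφ₂ : IsFlowOn M f₂ φ₂)
    (x : EuclideanSpace ℝ (Fin n)) (hx : x ∈ M) :
    (fun p : ℝ × ℝ =>
        φ₂ (-p.2) (φ₁ (-p.1) (φ₂ p.2 (φ₁ p.1 x))) - x
          - (p.1 * p.2) • lieBr f₁ f₂ x)
      =o[𝓝 (0 : ℝ × ℝ)] (fun p : ℝ × ℝ => p.1 * p.2) := by
  have hN : M ∈ 𝓝 x := hM.mem_nhds hx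
  exact flow_commutator_sub_isLittleO hN hφ₁.isFlowThrough hφ₂.isFlowThrough
    ((hf₁.contDiffAt hN).hasStrictFDerivAt one_ne_zero)
    ((hf₂.contDiffAt hN).hasStrictFDerivAt one_ne_zero)
end

section
/- Let f₁, f₂ be C² vector fields on an open set M ⊆ ℝⁿ. Then the identity [f₁,f₂]^{(s₂,s₁)}(x) = [f₁,f₂](x) holds for all x ∈ M and all sufficiently small (s₂,s₁) if and only if [f₁,[f₁,f₂]](x) = 0 and [f₂,[f₁,f₂]](x) = 0 for all x ∈ M. -/
open Asymptotics Filter Topology intervalIntegral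

/-- `(Ad_Φ h)(x) = DΦ⁻¹|_{Φ(x)}(h(Φ(x)))`, with `Φinv` the inverse of `Φ`. -/
noncomputable def AdC {n : ℕ}
    (Φ Φinv h : EuclideanSpace ℝ (Fin n) → EuclideanSpace ℝ (Fin n)) :
    EuclideanSpace ℝ (Fin n) → EuclideanSpace ℝ (Fin n) :=
  fun x => fderiv ℝ Φinv (Φ x) (h (Φ x))

/-!
Along the flow `φ` of `f`, `d/ds (Ad_{φ_s} h) = Ad_{φ_s} [f, h]`. If the adjoint action fixes
`[f₁, f₂]` for all small `(s₂, s₁)`, setting `s₂ = 0` (resp. `s₁ = 0`) and differentiating in the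
other time gives `[fᵢ, [f₁, f₂]] = 0`. Conversely, if both brackets vanish then
`s ↦ Ad_{φᵢ_s} [f₁, f₂]` is constant, and `Ad_{φ₁_{s₁} ∘ φ₂_{s₂}} = Ad_{φ₂_{s₂}} ∘ Ad_{φ₁_{s₁}}`.

The analytic input is that a `C²` field has a differentiable flow: `Dφ_s(y)` is the solution `U`
of the variational equation `U' = Df(φ_s y) U`, by a Gronwall estimate on the error of the
linearization `φ_s y + U(s) v` of `φ_s (y + v)`; and `Dφ_{-s}(φ_s y) = U(s)⁻¹`.
-/

open Set Metric Real
open scoped NNReal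

section Analysis

variable {E : Type*} [NormedAddCommGroup E] [NormedSpace ℝ E]

theorem IsPicardLindelof.exists_forall_mem_Icc_mem_closedBall_hasDerivWithinAt [CompleteSpace E]
    {f : ℝ → E → E} {tmin tmax : ℝ} {t₀ : Icc tmin tmax} {x₀ : E} {a L K : ℝ≥0}
    (hf : IsPicardLindelof f t₀ x₀ a 0 L K) :
    ∃ α : ℝ → E, α t₀ = x₀ ∧ ∀ t ∈ Icc tmin tmax,
      α t ∈ closedBall x₀ a ∧ HasDerivWithinAt α (f t (α t)) (Icc tmin tmax) t := by
  obtain ⟨α, hα⟩ := ODE.FunSpace.exists_isFixedPt_next hf (mem_closedBall_self le_rfl)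
  have hmem : ∀ t, α.compProj t ∈ closedBall x₀ a := fun _ ↦
    α.compProj_mem_closedBall (by simpa using hf.mul_max_le)
  refine ⟨α.compProj, by rw [ODE.FunSpace.compProj_val, ← hα, ODE.FunSpace.next_apply₀],
    fun t ht ↦ ⟨hmem t, ?_⟩⟩
  refine ODE.hasDerivWithinAt_picard_Icc t₀.2 hf.continuousOn_uncurry
    α.continuous_compProj.continuousOn (fun _ _ ↦ hmem _) x₀ ht |>.congr_of_mem
    (fun t' ht' ↦ ?_) ht
  nth_rw 1 [← hα]
  rw [ODE.FunSpace.compProj_of_mem ht', ODE.FunSpace.next_apply]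

theorem exists_hasDerivWithinAt_clm_comp [CompleteSpace E] {A : ℝ → E →L[ℝ] E} {δ : ℝ}
    {L : ℝ≥0} (hδ : 0 ≤ δ) (hA : ContinuousOn A (Icc (-δ) δ))
    (hAL : ∀ t ∈ Icc (-δ) δ, ‖A t‖ ≤ L) (hLδ : 2 * L * δ ≤ 1) :
    ∃ U : ℝ → E →L[ℝ] E, U 0 = ContinuousLinearMap.id ℝ E ∧ ∀ t ∈ Icc (-δ) δ,
      ‖U t‖ ≤ 2 ∧ HasDerivWithinAt U ((A t).comp (U t)) (Icc (-δ) δ) t := by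
  have hnorm : ∀ V ∈ closedBall (ContinuousLinearMap.id ℝ E) (1 : ℝ≥0), ‖V‖ ≤ 2 := fun V hV ↦
    calc ‖V‖ ≤ ‖ContinuousLinearMap.id ℝ E‖ + 1 := norm_le_of_mem_closedBall hV
      _ ≤ 1 + 1 := by gcongr; exact ContinuousLinearMap.norm_id_le
      _ = 2 := by norm_num
  have hpl : IsPicardLindelof (fun t V ↦ (A t).comp V)
      (⟨0, by constructor <;> linarith⟩ : Icc (-δ) δ) (ContinuousLinearMap.id ℝ E) 1 0 (2 * L) L :=
    { lipschitzOnWith := fun t ht ↦ LipschitzOnWith.of_dist_le_mul fun V _ W _ ↦ by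
        rw [dist_eq_norm, dist_eq_norm, ← ContinuousLinearMap.comp_sub]
        exact ((A t).opNorm_comp_le _).trans (by gcongr; exact hAL t ht)
      continuousOn := fun _ _ ↦ hA.clm_comp continuousOn_const
      norm_le := fun t ht V hV ↦
        calc ‖(A t).comp V‖ ≤ ‖A t‖ * ‖V‖ := (A t).opNorm_comp_le V
          _ ≤ L * 2 := by gcongr; exacts [hAL t ht, hnorm V hV]
          _ = (2 * L : ℝ≥0) := by push_cast; ring
      mul_max_le := by simpa using hLδ }
  obtain ⟨U, hU0, hU⟩ := hpl.exists_forall_mem_Icc_mem_closedBall_hasDerivWithinAt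
  exact ⟨U, hU0, fun t ht ↦ ⟨hnorm _ (hU t ht).1, (hU t ht).2⟩⟩

theorem eqOn_Ioo_of_contDiffOn {M : Set E} (hM : IsOpen M) {g : E → E}
    (hg : ContDiffOn ℝ 1 g M) {a b t₀ : ℝ} (ht₀ : t₀ ∈ Ioo a b) {u w : ℝ → E}
    (hu : ∀ t ∈ Ioo a b, u t ∈ M ∧ HasDerivAt u (g (u t)) t)
    (hw : ∀ t ∈ Ioo a b, w t ∈ M ∧ HasDerivAt w (g (w t)) t) (h₀ : u t₀ = w t₀) :
    EqOn u w (Ioo a b) := by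
  -- the agreement set is open by local uniqueness and closed by continuity
  let S : Set ℝ := Ioo a b ∩ {t | u t = w t}
  have hS : IsOpen S := by
    refine isOpen_iff_mem_nhds.2 fun t ⟨ht, heq⟩ ↦ ?_
    obtain ⟨K, s, hs, hlip⟩ := (hg.contDiffAt (hM.mem_nhds (hu t ht).1)).exists_lipschitzOnWith
    have hI : Ioo a b ∈ 𝓝 t := isOpen_Ioo.mem_nhds ht
    have huw : u =ᶠ[𝓝 t] w := by
      refine ODE_solution_unique_of_eventually (v := fun _ ↦ g) (s := fun _ ↦ s)
        (.of_forall fun _ ↦ hlip) ?_ ?_ heq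
      · filter_upwards [hI, (hu t ht).2.continuousAt.preimage_mem_nhds hs] with τ hτ hτs
        exact ⟨(hu τ hτ).2, hτs⟩
      · filter_upwards [hI, (hw t ht).2.continuousAt.preimage_mem_nhds (heq ▸ hs)] with τ hτ hτs
        exact ⟨(hw τ hτ).2, hτs⟩
    filter_upwards [hI, huw] with τ hτ hτuw using ⟨hτ, hτuw⟩
  refine fun t ht ↦ (isPreconnected_Ioo.subset_of_closure_inter_subset hS
    ⟨t₀, ht₀, ht₀, h₀⟩ ?_ ht).2
  rintro τ ⟨hτS, hτ⟩
  have hcont : ContinuousAt (fun τ ↦ u τ - w τ) τ :=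
    (hu τ hτ).2.continuousAt.sub (hw τ hτ).2.continuousAt
  have hzero : u τ - w τ ∈ closure {(0 : E)} :=
    closure_mono (by rintro - ⟨σ, hσ, rfl⟩; exact sub_eq_zero.2 hσ.2)
      (hcont.continuousWithinAt.mem_closure_image hτS)
  rw [closure_singleton, mem_singleton_iff, sub_eq_zero] at hzero
  exact ⟨hτ, hzero⟩

theorem Convex.norm_image_sub_sub_le_of_lipschitz {F : Type*} [NormedAddCommGroup F]
    [NormedSpace ℝ F] {K : Set E} (hK : Convex ℝ K) {g : E → F} {g' : E → E →L[ℝ] F} {L₂ : ℝ≥0}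
    (hg : ∀ z ∈ K, HasFDerivAt g (g' z) z)
    (hg' : ∀ a ∈ K, ∀ b ∈ K, ‖g' b - g' a‖ ≤ L₂ * ‖b - a‖) {a b : E} (ha : a ∈ K) (hb : b ∈ K) :
    ‖g b - g a - g' a (b - a)‖ ≤ L₂ * ‖b - a‖ ^ 2 := by
  have hseg : segment ℝ a b ⊆ K := hK.segment_subset ha hb
  calc ‖g b - g a - g' a (b - a)‖ ≤ L₂ * ‖b - a‖ * ‖b - a‖ :=
        (convex_segment a b).norm_image_sub_le_of_norm_hasFDerivWithin_le'
          (fun z hz ↦ (hg z (hseg hz)).hasFDerivWithinAt)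
          (fun z hz ↦ (hg' a ha z (hseg hz)).trans
            (mul_le_mul_of_nonneg_left (norm_sub_le_of_mem_segment hz) L₂.2))
          (left_mem_segment ℝ a b) (right_mem_segment ℝ a b)
    _ = L₂ * ‖b - a‖ ^ 2 := by ring

theorem norm_sub_linearization_le {K : Set E} (hK : Convex ℝ K) {g : E → E}
    {g' : E → E →L[ℝ] E} {L L₂ B : ℝ≥0} (hL : 0 < L) (hg : ∀ z ∈ K, HasFDerivAt g (g' z) z)
    (hgL : ∀ z ∈ K, ‖g' z‖ ≤ L) (hg' : ∀ a ∈ K, ∀ b ∈ K, ‖g' b - g' a‖ ≤ L₂ * ‖b - a‖)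
    {u p : ℝ → E} {U : ℝ → E →L[ℝ] E} {v : E} {s : ℝ} (hs : 0 ≤ s)
    (hu : ∀ t ∈ Icc 0 s, HasDerivAt u (g (u t)) t ∧ u t ∈ K)
    (hp : ∀ t ∈ Icc 0 s, HasDerivAt p (g (p t)) t ∧ p t ∈ K)
    (hU : ∀ t ∈ Icc 0 s, HasDerivAt U ((g' (p t)).comp (U t)) t ∧ ‖U t‖ ≤ B ∧ p t + U t v ∈ K)
    (h₀ : u 0 = p 0 + U 0 v) :
    ‖u s - (p s + U s v)‖ ≤ L₂ * (B * ‖v‖) ^ 2 / L * (exp (L * s) - 1) := by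
  have hlip : LipschitzOnWith L g K :=
    hK.lipschitzOnWith_of_nnnorm_hasFDerivWithin_le (fun z hz ↦ (hg z hz).hasFDerivWithinAt)
      fun z hz ↦ by rw [← NNReal.coe_le_coe, coe_nnnorm]; exact hgL z hz
  have hβ : ∀ t ∈ Icc 0 s, HasDerivAt (fun t ↦ p t + U t v) (g (p t) + g' (p t) (U t v)) t :=
    fun t ht ↦ (hp t ht).1.add (by simpa using (hU t ht).1.clm_apply (hasDerivAt_const t v))
  -- by Taylor's formula, `p + U v` is an approximate trajectory with defect `L₂ (B ‖v‖)²`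
  have hβerr : ∀ t ∈ Icc 0 s,
      dist (g (p t) + g' (p t) (U t v)) (g (p t + U t v)) ≤ L₂ * (B * ‖v‖) ^ 2 := by
    intro t ht
    have hUv : ‖U t v‖ ≤ B * ‖v‖ :=
      ((U t).le_opNorm v).trans (by gcongr; exact (hU t ht).2.1)
    rw [dist_comm, dist_eq_norm]
    calc ‖g (p t + U t v) - (g (p t) + g' (p t) (U t v))‖
        = ‖g (p t + U t v) - g (p t) - g' (p t) (p t + U t v - p t)‖ := by
          rw [add_sub_cancel_left, sub_sub]
      _ ≤ L₂ * ‖p t + U t v - p t‖ ^ 2 :=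
          hK.norm_image_sub_sub_le_of_lipschitz hg hg' (hp t ht).2 (hU t ht).2.2
      _ ≤ L₂ * (B * ‖v‖) ^ 2 := by
          rw [add_sub_cancel_left]; gcongr
  have key := dist_le_of_approx_trajectories_ODE_of_mem (v := fun _ ↦ g) (s := fun _ ↦ K)
    (εf := 0) (δ := 0) (fun _ _ ↦ hlip)
    (fun t ht ↦ (hu t ht).1.continuousAt.continuousWithinAt)
    (fun t ht ↦ (hu t (Ico_subset_Icc_self ht)).1.hasDerivWithinAt) (fun _ _ ↦ by simp)
    (fun t ht ↦ (hu t (Ico_subset_Icc_self ht)).2)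
    (fun t ht ↦ (hβ t ht).continuousAt.continuousWithinAt)
    (fun t ht ↦ (hβ t (Ico_subset_Icc_self ht)).hasDerivWithinAt)
    (fun t ht ↦ hβerr t (Ico_subset_Icc_self ht))
    (fun t ht ↦ (hU t (Ico_subset_Icc_self ht)).2.2) (by simp [h₀]) s ⟨hs, le_rfl⟩
  rw [dist_eq_norm, gronwallBound_of_K_ne_0 (by exact_mod_cast hL.ne')] at key
  simpa using key

theorem hasFDerivAt_of_norm_sub_sub_le_mul_sq {F : Type*} [NormedAddCommGroup F]
    [NormedSpace ℝ F] {g : E → F} {g' : E →L[ℝ] F} {y : E} {ε c : ℝ} (hε : 0 < ε)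
    (h : ∀ v, ‖v‖ ≤ ε → ‖g (y + v) - g y - g' v‖ ≤ c * ‖v‖ ^ 2) : HasFDerivAt g g' y := by
  rw [hasFDerivAt_iff_isLittleO_nhds_zero]
  have hO : (fun v ↦ g (y + v) - g y - g' v) =O[𝓝 0] fun v ↦ ‖v‖ * ‖v‖ := by
    refine isBigO_iff.2 ⟨c, ?_⟩
    filter_upwards [closedBall_mem_nhds (0 : E) hε] with v hv
    rw [mem_closedBall, dist_zero_right] at hv
    simpa [sq] using h v hv
  refine hO.trans_isLittleO (isLittleO_iff.2 fun δ hδ ↦ ?_)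
  filter_upwards [closedBall_mem_nhds (0 : E) hδ] with v hv
  rw [mem_closedBall, dist_zero_right] at hv
  rw [norm_mul, norm_norm]
  gcongr

theorem HasFDerivAt.comp_eq_id_of_eventually_leftInverse {F : Type*} [NormedAddCommGroup F]
    [NormedSpace ℝ F] {g : E → F} {k : F → E}
    {g' : E →L[ℝ] F} {k' : F →L[ℝ] E} {y : E} (hg : HasFDerivAt g g' y)
    (hk : HasFDerivAt k k' (g y)) (hkg : ∀ᶠ z in 𝓝 y, k (g z) = z) :
    k'.comp g' = ContinuousLinearMap.id ℝ E :=
  (hk.comp y hg).unique ((hasFDerivAt_id y).congr_of_eventuallyEq hkg)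

theorem HasDerivAt.ringInverse {R : Type*} [NormedRing R] [NormedAlgebra ℝ R] [CompleteSpace R]
    {U : ℝ → R} {U' : R} {s : ℝ} {u : Rˣ} (hU : HasDerivAt U U' s) (hu : U s = u) :
    HasDerivAt (fun σ ↦ Ring.inverse (U σ)) (-(↑u⁻¹ * U' * ↑u⁻¹)) s := by
  have hinv := hasFDerivAt_ringInverse (𝕜 := ℝ) u
  rw [← hu] at hinv
  simpa [Function.comp_def, ContinuousLinearMap.mulLeftRight_apply] using hinv.comp_hasDerivAt s hU

theorem IsCompact.exists_pos_bound_of_continuousOn {X F : Type*} [TopologicalSpace X]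
    [SeminormedAddGroup F] {K : Set X} (hK : IsCompact K) {g : X → F} (hg : ContinuousOn g K) :
    ∃ C : ℝ≥0, 0 < C ∧ ∀ z ∈ K, ‖g z‖ ≤ C := by
  obtain ⟨C, hC⟩ := hK.exists_bound_of_continuousOn hg
  exact ⟨⟨max C 1, by positivity⟩, lt_of_lt_of_le one_pos (le_max_right C 1),
    fun z hz ↦ (hC z hz).trans (le_max_left C 1)⟩

theorem ContDiffOn.exists_closedBall_bounds [ProperSpace E] {M : Set E} (hM : IsOpen M)
    {f : E → E} (hf : ContDiffOn ℝ 2 f M) {x : E} (hx : x ∈ M) :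
    ∃ R > 0, closedBall x R ⊆ M ∧ ∃ C L L₂ : ℝ≥0, 0 < C ∧ 0 < L ∧
      ∀ z ∈ closedBall x R, ‖f z‖ ≤ C ∧ ‖fderiv ℝ f z‖ ≤ L ∧
        ∀ w ∈ closedBall x R, ‖fderiv ℝ f w - fderiv ℝ f z‖ ≤ L₂ * ‖w - z‖ := by
  obtain ⟨R, hR, hRM⟩ := nhds_basis_closedBall.mem_iff.1 (hM.mem_nhds hx)
  have hK := isCompact_closedBall x R
  have hf' : ContDiffOn ℝ 1 (fderiv ℝ f) M := hf.fderiv_of_isOpen hM (by norm_num)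
  obtain ⟨C, hC, hfC⟩ := hK.exists_pos_bound_of_continuousOn (hf.continuousOn.mono hRM)
  obtain ⟨L, hL, hf'L⟩ := hK.exists_pos_bound_of_continuousOn (hf'.continuousOn.mono hRM)
  obtain ⟨L₂, -, hf''L⟩ := hK.exists_pos_bound_of_continuousOn
    ((hf'.continuousOn_fderiv_of_isOpen hM le_rfl).mono hRM)
  refine ⟨R, hR, hRM, C, L, L₂, hC, hL, fun z hz ↦ ⟨hfC z hz, hf'L z hz, fun w hw ↦ ?_⟩⟩
  exact (convex_closedBall x R).norm_image_sub_le_of_norm_hasFDerivWithin_le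
    (fun y hy ↦ ((hf'.differentiableOn one_ne_zero).differentiableAt
      (hM.mem_nhds (hRM hy))).hasFDerivAt.hasFDerivWithinAt) hf''L hz hw

end Analysis

section Flow

variable {n : ℕ} {M : Set (EuclideanSpace ℝ (Fin n))}
  {f : EuclideanSpace ℝ (Fin n) → EuclideanSpace ℝ (Fin n)}
  {φ : ℝ → EuclideanSpace ℝ (Fin n) → EuclideanSpace ℝ (Fin n)}

local notation "𝔼" => EuclideanSpace ℝ (Fin n)

theorem IsFlowOn.neg (hφ : IsFlowOn M f φ) : IsFlowOn M (fun z ↦ -f z) fun t ↦ φ (-t) := by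
  intro x hx
  refine ⟨by simpa using (hφ x hx).1, fun t ↦ ⟨((hφ x hx).2 (-t)).1, ?_⟩⟩
  simpa [Function.comp_def] using ((hφ x hx).2 (-t)).2.scomp t (hasDerivAt_neg t)

theorem IsFlowOn.apply_neg_apply (hM : IsOpen M) (hf : ContDiffOn ℝ 1 f M)
    (hφ : IsFlowOn M f φ) {z : 𝔼} (hz : z ∈ M) (t : ℝ) : φ (-t) (φ t z) = z := by
  have hδ : (0 : ℝ) < |t| + 1 := by positivity
  have hzt : φ t z ∈ M := ((hφ z hz).2 t).1
  have heq := eqOn_Ioo_of_contDiffOn hM hf.neg (t₀ := 0) ⟨by linarith, hδ⟩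
    (u := fun τ ↦ φ (-τ) (φ t z)) (w := fun τ ↦ φ (t - τ) z)
    (fun τ _ ↦ (hφ.neg (φ t z) hzt).2 τ)
    (fun τ _ ↦ ⟨((hφ z hz).2 (t - τ)).1, by
      simpa [Function.comp_def] using
        ((hφ z hz).2 (t - τ)).2.scomp τ ((hasDerivAt_id τ).const_sub t)⟩)
    (by simpa using (hφ (φ t z) hzt).1)
    (show t ∈ Ioo (-(|t| + 1)) (|t| + 1) by
      constructor <;> linarith [neg_abs_le t, le_abs_self t])
  simpa [(hφ z hz).1] using heq

theorem IsFlowOn.apply_zero_eventuallyEq (hM : IsOpen M) (hφ : IsFlowOn M f φ) {x : 𝔼}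
    (hx : x ∈ M) : φ 0 =ᶠ[𝓝 x] id := by
  filter_upwards [hM.mem_nhds hx] with z hz using (hφ z hz).1

theorem IsFlowOn.dist_apply_le (hM : IsOpen M) (hf : ContDiffOn ℝ 1 f M)
    (hφ : IsFlowOn M f φ) {z : 𝔼} {r : ℝ} {C K : ℝ≥0} (hr : closedBall z r ⊆ M) (hC : 0 < C)
    (hfC : ∀ w ∈ closedBall z r, ‖f w‖ ≤ C) (hfK : LipschitzOnWith K f (closedBall z r))
    {t : ℝ} (ht : C * |t| < r) : dist (φ t z) z ≤ C * |t| := by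
  have hC' : 0 < (C : ℝ) := hC
  have ht' : |t| < r / C := by rwa [lt_div_iff₀ hC', mul_comm]
  have hδ : 0 < r / C := (abs_nonneg t).trans_lt ht'
  have hr0 : 0 ≤ r := (mul_nonneg C.coe_nonneg (abs_nonneg t)).trans ht.le
  have hz : z ∈ M := hr (mem_closedBall_self hr0)
  have hpl : IsPicardLindelof (fun _ ↦ f)
      (⟨0, by constructor <;> linarith⟩ : Icc (-(r / C)) (r / C)) z ⟨r, hr0⟩ 0 C K :=
    { lipschitzOnWith := fun _ _ ↦ hfK
      continuousOn := fun _ _ ↦ continuousOn_const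
      norm_le := fun _ _ ↦ hfC
      mul_max_le := show (C : ℝ) * max (r / C - 0) (0 - -(r / C)) ≤ r - 0 by
        simp [mul_div_cancel₀ _ hC'.ne'] }
  obtain ⟨α, hα0, hα⟩ := hpl.exists_forall_mem_Icc_mem_closedBall_hasDerivWithinAt
  have hφα : φ t z = α t := eqOn_Ioo_of_contDiffOn hM hf (t₀ := 0) ⟨by linarith, hδ⟩
    (fun τ _ ↦ (hφ z hz).2 τ)
    (fun τ hτ ↦ ⟨hr (hα τ (Ioo_subset_Icc_self hτ)).1,
      (hα τ (Ioo_subset_Icc_self hτ)).2.hasDerivAt (Icc_mem_nhds hτ.1 hτ.2)⟩)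
    ((hφ z hz).1.trans hα0.symm) (abs_lt.1 ht')
  have hmv := (convex_Icc (-(r / C)) (r / C)).norm_image_sub_le_of_norm_hasDerivWithin_le
    (fun τ hτ ↦ (hα τ hτ).2) (fun τ hτ ↦ hfC _ (hα τ hτ).1)
    (show (0 : ℝ) ∈ Icc (-(r / C)) (r / C) by constructor <;> linarith)
    (Ioo_subset_Icc_self (abs_lt.1 ht'))
  simpa [hφα, dist_eq_norm, hα0] using hmv

theorem IsFlowOn.hasFDerivAt_of_nonneg (hφ : IsFlowOn M f φ) {K : Set 𝔼} (hK : Convex ℝ K)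
    {f' : 𝔼 → 𝔼 →L[ℝ] 𝔼} {L L₂ B : ℝ≥0} (hL : 0 < L) (hf : ∀ z ∈ K, HasFDerivAt f (f' z) z)
    (hf'L : ∀ z ∈ K, ‖f' z‖ ≤ L) (hf' : ∀ a ∈ K, ∀ b ∈ K, ‖f' b - f' a‖ ≤ L₂ * ‖b - a‖)
    {y : 𝔼} {ε s : ℝ} (hε : 0 < ε) (hs : 0 ≤ s) (hyM : closedBall y ε ⊆ M)
    {U : ℝ → 𝔼 →L[ℝ] 𝔼} (hU0 : U 0 = ContinuousLinearMap.id ℝ 𝔼)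
    (hU : ∀ t ∈ Icc 0 s, HasDerivAt U ((f' (φ t y)).comp (U t)) t ∧ ‖U t‖ ≤ B)
    (hKmem : ∀ v : 𝔼, ‖v‖ ≤ ε → ∀ t ∈ Icc 0 s, φ t (y + v) ∈ K ∧ φ t y + U t v ∈ K) :
    HasFDerivAt (φ s) (U s) y := by
  refine hasFDerivAt_of_norm_sub_sub_le_mul_sq (c := L₂ * B ^ 2 / L * (exp (L * s) - 1)) hε
    fun v hv ↦ ?_
  have hy : y ∈ M := hyM (mem_closedBall_self hε.le)
  have hyv : y + v ∈ M := hyM (by simpa [dist_eq_norm] using hv)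
  have herr := norm_sub_linearization_le hK hL hf hf'L hf' hs
    (u := fun t ↦ φ t (y + v)) (p := fun t ↦ φ t y)
    (fun t ht ↦ ⟨((hφ _ hyv).2 t).2, (hKmem v hv t ht).1⟩)
    (fun t ht ↦ ⟨((hφ _ hy).2 t).2, by simpa using (hKmem 0 (by simpa using hε.le) t ht).1⟩)
    (fun t ht ↦ ⟨(hU t ht).1, (hU t ht).2, (hKmem v hv t ht).2⟩)
    (by simp [(hφ _ hyv).1, (hφ _ hy).1, hU0])
  calc ‖φ s (y + v) - φ s y - U s v‖ = ‖φ s (y + v) - (φ s y + U s v)‖ := by rw [sub_sub]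
    _ ≤ L₂ * (B * ‖v‖) ^ 2 / L * (exp (L * s) - 1) := herr
    _ = L₂ * B ^ 2 / L * (exp (L * s) - 1) * ‖v‖ ^ 2 := by ring

theorem IsFlowOn.hasFDerivAt_of_abs_lt (hφ : IsFlowOn M f φ) {K : Set 𝔼} (hK : Convex ℝ K)
    {f' : 𝔼 → 𝔼 →L[ℝ] 𝔼} {L L₂ B : ℝ≥0} (hL : 0 < L) (hf : ∀ z ∈ K, HasFDerivAt f (f' z) z)
    (hf'L : ∀ z ∈ K, ‖f' z‖ ≤ L) (hf' : ∀ a ∈ K, ∀ b ∈ K, ‖f' b - f' a‖ ≤ L₂ * ‖b - a‖)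
    {y : 𝔼} {ε δ : ℝ} (hε : 0 < ε) (hyM : closedBall y ε ⊆ M)
    {U : ℝ → 𝔼 →L[ℝ] 𝔼} (hU0 : U 0 = ContinuousLinearMap.id ℝ 𝔼)
    (hU : ∀ t, |t| < δ → HasDerivAt U ((f' (φ t y)).comp (U t)) t ∧ ‖U t‖ ≤ B)
    (hKmem : ∀ v : 𝔼, ‖v‖ ≤ ε → ∀ t, |t| < δ → φ t (y + v) ∈ K ∧ φ t y + U t v ∈ K)
    {s : ℝ} (hs : |s| < δ) : HasFDerivAt (φ s) (U s) y := by
  rcases le_or_gt 0 s with hs0 | hs0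
  · have hIcc : ∀ t ∈ Icc 0 s, |t| < δ := fun t ht ↦
      (abs_le_abs_of_nonneg ht.1 ht.2).trans_lt hs
    exact hφ.hasFDerivAt_of_nonneg hK hL hf hf'L hf' hε hs0 hyM hU0
      (fun t ht ↦ hU t (hIcc t ht)) (fun v hv t ht ↦ hKmem v hv t (hIcc t ht))
  · have hIcc : ∀ t ∈ Icc 0 (-s), |-t| < δ := fun t ht ↦ by
      rw [abs_neg]; exact (abs_le_abs_of_nonneg ht.1 ht.2).trans_lt (by rwa [abs_neg])
    have hrev := hφ.neg.hasFDerivAt_of_nonneg hK hL (f' := fun z ↦ -f' z) (U := fun t ↦ U (-t))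
      (fun z hz ↦ (hf z hz).neg) (fun z hz ↦ by simpa using hf'L z hz)
      (fun a ha b hb ↦ by rw [← neg_sub', norm_neg]; exact hf' a ha b hb) hε
      (neg_nonneg.2 hs0.le) hyM (by simpa using hU0)
      (fun t ht ↦ ⟨by simpa [Function.comp_def] using
          (hU (-t) (hIcc t ht)).1.scomp t (hasDerivAt_neg t), (hU (-t) (hIcc t ht)).2⟩)
      (fun v hv t ht ↦ hKmem v hv (-t) (hIcc t ht))
    simpa using hrev

theorem IsFlowOn.exists_variational_solution (hM : IsOpen M) (hf : ContDiffOn ℝ 1 f M)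
    (hφ : IsFlowOn M f φ) {y : 𝔼} (hy : y ∈ M) {δ : ℝ} {L : ℝ≥0} (hδ : 0 ≤ δ)
    (hL : ∀ t ∈ Icc (-δ) δ, ‖fderiv ℝ f (φ t y)‖ ≤ L) (hLδ : 2 * L * δ ≤ 1) :
    ∃ U : ℝ → 𝔼 →L[ℝ] 𝔼, U 0 = ContinuousLinearMap.id ℝ 𝔼 ∧ ∀ t, |t| < δ →
      HasDerivAt U ((fderiv ℝ f (φ t y)).comp (U t)) t ∧ ‖U t‖ ≤ 2 := by
  have hcont : ContinuousOn (fun t ↦ fderiv ℝ f (φ t y)) (Icc (-δ) δ) :=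
    (hf.continuousOn_fderiv_of_isOpen hM le_rfl).comp
      (fun t _ ↦ ((hφ y hy).2 t).2.continuousAt.continuousWithinAt)
      fun t _ ↦ ((hφ y hy).2 t).1
  obtain ⟨U, hU0, hU⟩ := exists_hasDerivWithinAt_clm_comp hδ hcont hL hLδ
  refine ⟨U, hU0, fun t ht ↦ ?_⟩
  have ht' := abs_lt.1 ht
  have htI : t ∈ Icc (-δ) δ := ⟨ht'.1.le, ht'.2.le⟩
  exact ⟨(hU t htI).2.hasDerivAt (Icc_mem_nhds ht'.1 ht'.2), (hU t htI).1⟩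

theorem IsFlowOn.exists_hasFDerivAt_of_mapsTo (hM : IsOpen M) (hf : ContDiffOn ℝ 1 f M)
    (hφ : IsFlowOn M f φ) {x : 𝔼} {R δ : ℝ} {L L₂ : ℝ≥0} (hR : 0 < R)
    (hRM : closedBall x R ⊆ M) (hL : 0 < L) (hf' : ∀ z ∈ closedBall x R, ‖fderiv ℝ f z‖ ≤ L ∧
      ∀ w ∈ closedBall x R, ‖fderiv ℝ f w - fderiv ℝ f z‖ ≤ L₂ * ‖w - z‖)
    (hδ : 0 < δ) (hLδ : 2 * L * δ ≤ 1)
    (hmaps : ∀ z ∈ closedBall x (R / 4), ∀ t, |t| ≤ δ → φ t z ∈ closedBall x (R / 2))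
    {y : 𝔼} (hy : y ∈ closedBall x (R / 8)) :
    ∃ U : ℝ → 𝔼 →L[ℝ] 𝔼, ∀ s, |s| < δ →
      HasFDerivAt (φ s) (U s) y ∧ HasDerivAt U ((fderiv ℝ f (φ s y)).comp (U s)) s := by
  have hy4 : y ∈ closedBall x (R / 4) := closedBall_subset_closedBall (by linarith) hy
  have hfK : ∀ z ∈ closedBall x R, HasFDerivAt f (fderiv ℝ f z) z := fun z hz ↦
    ((hf.differentiableOn one_ne_zero).differentiableAt (hM.mem_nhds (hRM hz))).hasFDerivAt
  obtain ⟨U, hU0, hU⟩ := hφ.exists_variational_solution hM hf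
    (hRM (closedBall_subset_closedBall (by linarith) hy)) hδ.le
    (fun t ht ↦ (hf' _ (closedBall_subset_closedBall (by linarith)
      (hmaps y hy4 t (abs_le.2 ⟨ht.1, ht.2⟩)))).1) hLδ
  refine ⟨U, fun s hs ↦ ⟨hφ.hasFDerivAt_of_abs_lt (convex_closedBall x R) hL hfK
    (fun z hz ↦ (hf' z hz).1) (fun a ha b hb ↦ (hf' a ha).2 b hb) (by positivity : 0 < R / 8)
    ?_ hU0 (B := 2) (fun t ht ↦ by exact_mod_cast hU t ht) ?_ hs, (hU s hs).1⟩⟩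
  · exact (closedBall_subset_closedBall' (by linarith [mem_closedBall.1 hy])).trans hRM
  intro v hv t ht
  have hyv : y + v ∈ closedBall x (R / 4) := by
    rw [mem_closedBall]
    linarith [dist_triangle (y + v) y x, mem_closedBall.1 hy,
      show dist (y + v) y = ‖v‖ by simp [dist_eq_norm]]
  have hUv : ‖U t v‖ ≤ 2 * (R / 8) :=
    ((U t).le_opNorm v).trans (mul_le_mul (hU t ht).2 hv (norm_nonneg v) zero_le_two)
  have hyt := mem_closedBall.1 (hmaps y hy4 t ht.le)
  refine ⟨closedBall_subset_closedBall (by linarith) (hmaps _ hyv t ht.le), ?_⟩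
  rw [mem_closedBall]
  linarith [dist_triangle (φ t y + U t v) (φ t y) x,
    show dist (φ t y + U t v) (φ t y) = ‖U t v‖ by simp [dist_eq_norm]]

theorem IsFlowOn.exists_hasFDerivAt (hM : IsOpen M) (hf : ContDiffOn ℝ 2 f M)
    (hφ : IsFlowOn M f φ) {x : 𝔼} (hx : x ∈ M) :
    ∃ δ > (0 : ℝ), ∃ ρ > (0 : ℝ), ∃ C > (0 : ℝ), closedBall x ρ ⊆ M ∧
      (∀ y ∈ closedBall x ρ, ∀ s, |s| < δ → dist (φ s y) y ≤ C * |s|) ∧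
      ∀ y ∈ closedBall x ρ, ∃ U : ℝ → 𝔼 →L[ℝ] 𝔼, ∀ s, |s| < δ →
        HasFDerivAt (φ s) (U s) y ∧ HasDerivAt U ((fderiv ℝ f (φ s y)).comp (U s)) s := by
  obtain ⟨R, hR, hRM, C, L, L₂, hC, hL, hbd⟩ := hf.exists_closedBall_bounds hM hx
  have hf₁ : ContDiffOn ℝ 1 f M := hf.of_le one_le_two
  have hlip : LipschitzOnWith L f (closedBall x R) :=
    (convex_closedBall x R).lipschitzOnWith_of_nnnorm_hasFDerivWithin_le
      (fun z hz ↦ ((hf₁.differentiableOn one_ne_zero).differentiableAt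
        (hM.mem_nhds (hRM hz))).hasFDerivAt.hasFDerivWithinAt)
      fun z hz ↦ by rw [← NNReal.coe_le_coe, coe_nnnorm]; exact (hbd z hz).2.1
  have hsub : ∀ z ∈ closedBall x (R / 2), closedBall z (R / 2) ⊆ closedBall x R :=
    fun z hz ↦ closedBall_subset_closedBall' (by rw [mem_closedBall] at hz; linarith)
  set δ := min (R / (4 * C)) (1 / (2 * L))
  have hCδ : C * δ ≤ R / 4 :=
    calc C * δ ≤ C * (R / (4 * C)) := by gcongr; exact min_le_left _ _
      _ = R / 4 := by field_simp
  have hLδ : 2 * L * δ ≤ 1 :=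
    calc 2 * L * δ ≤ 2 * L * (1 / (2 * L)) := by gcongr; exact min_le_right _ _
      _ = 1 := by field_simp
  have hspeed : ∀ z ∈ closedBall x (R / 2), ∀ t, |t| ≤ δ → dist (φ t z) z ≤ C * |t| :=
    fun z hz t ht ↦ hφ.dist_apply_le hM hf₁ ((hsub z hz).trans hRM) hC
      (fun w hw ↦ (hbd w (hsub z hz hw)).1) (hlip.mono (hsub z hz))
      ((mul_le_mul_of_nonneg_left ht C.coe_nonneg).trans_lt (by linarith))
  have hmaps : ∀ z ∈ closedBall x (R / 4), ∀ t, |t| ≤ δ → φ t z ∈ closedBall x (R / 2) := by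
    intro z hz t ht
    have hzt := hspeed z (closedBall_subset_closedBall (by linarith) hz) t ht
    rw [mem_closedBall] at hz ⊢
    linarith [dist_triangle (φ t z) z x, mul_le_mul_of_nonneg_left ht C.coe_nonneg]
  refine ⟨δ, by positivity, R / 8, by positivity, C, hC,
    (closedBall_subset_closedBall (by linarith)).trans hRM,
    fun y hy s hs ↦ hspeed y (closedBall_subset_closedBall (by linarith) hy) s hs.le,
    fun y hy ↦ hφ.exists_hasFDerivAt_of_mapsTo hM hf₁ hR hRM hL (fun z hz ↦ (hbd z hz).2)
      (by positivity) hLδ hmaps hy⟩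

theorem IsFlowOn.mul_eq_one_of_hasFDerivAt (hM : IsOpen M) (hf : ContDiffOn ℝ 1 f M)
    (hφ : IsFlowOn M f φ) {y : 𝔼} (hy : y ∈ M) {σ : ℝ} {U V : 𝔼 →L[ℝ] 𝔼}
    (hU : HasFDerivAt (φ σ) U y) (hV : HasFDerivAt (φ (-σ)) V (φ σ y)) :
    U * V = 1 ∧ V * U = 1 := by
  have hσy : φ σ y ∈ M := ((hφ y hy).2 σ).1
  have hU' : HasFDerivAt (φ σ) U (φ (-σ) (φ σ y)) := by rwa [hφ.apply_neg_apply hM hf hy]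
  refine ⟨hV.comp_eq_id_of_eventually_leftInverse hU' ?_,
    hU.comp_eq_id_of_eventually_leftInverse hV ?_⟩
  · filter_upwards [hM.mem_nhds hσy] with z hz
    simpa using hφ.apply_neg_apply hM hf hz (-σ)
  · filter_upwards [hM.mem_nhds hy] with z hz using hφ.apply_neg_apply hM hf hz σ

theorem IsFlowOn.exists_variational_inv_hasFDerivAt (hM : IsOpen M) (hf : ContDiffOn ℝ 2 f M)
    (hφ : IsFlowOn M f φ) {x : 𝔼} (hx : x ∈ M) :
    ∃ δ > (0 : ℝ), ∃ ρ > (0 : ℝ), closedBall x ρ ⊆ M ∧ ∀ y ∈ closedBall x ρ,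
      ∃ U : ℝ → 𝔼 →L[ℝ] 𝔼, ∀ s, |s| < δ → HasDerivAt U ((fderiv ℝ f (φ s y)).comp (U s)) s ∧
        ∃ u : (𝔼 →L[ℝ] 𝔼)ˣ, ↑u = U s ∧ HasFDerivAt (φ (-s)) (↑u⁻¹ : 𝔼 →L[ℝ] 𝔼) (φ s y) := by
  obtain ⟨δa, hδa, ρa, hρa, C, hC, hρaM, hspeed, hUa⟩ := hφ.exists_hasFDerivAt hM hf hx
  obtain ⟨δb, hδb, ρb, hρb, -, -, -, -, hUb⟩ := hφ.neg.exists_hasFDerivAt hM hf.neg hx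
  set δ := min δa (min δb (ρb / (2 * C)))
  have hδa' : δ ≤ δa := min_le_left _ _
  have hδb' : δ ≤ δb := (min_le_right _ _).trans (min_le_left _ _)
  have hCδ : C * δ ≤ ρb / 2 :=
    calc C * δ ≤ C * (ρb / (2 * C)) := by gcongr; exact (min_le_right _ _).trans (min_le_right _ _)
      _ = ρb / 2 := by field_simp
  have hρ : closedBall x (min ρa (ρb / 2)) ⊆ closedBall x ρa :=
    closedBall_subset_closedBall (min_le_left _ _)
  refine ⟨δ, by positivity, min ρa (ρb / 2), by positivity, hρ.trans hρaM, fun y hy ↦ ?_⟩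
  obtain ⟨U, hU⟩ := hUa y (hρ hy)
  refine ⟨U, fun σ hσ ↦ ⟨(hU σ (hσ.trans_le hδa')).2, ?_⟩⟩
  have hσy : φ σ y ∈ closedBall x ρb := by
    rw [mem_closedBall]
    linarith [dist_triangle (φ σ y) y x, hspeed y (hρ hy) σ (hσ.trans_le hδa'),
      mul_le_mul_of_nonneg_left hσ.le hC.le, mem_closedBall.1 hy, min_le_right ρa (ρb / 2)]
  obtain ⟨V, hV⟩ := hUb (φ σ y) hσy
  have hVσ : HasFDerivAt (φ (-σ)) (V σ) (φ σ y) := (hV σ (hσ.trans_le hδb')).1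
  obtain ⟨h₁, h₂⟩ := hφ.mul_eq_one_of_hasFDerivAt hM (hf.of_le one_le_two) (hρaM (hρ hy))
    (hU σ (hσ.trans_le hδa')).1 hVσ
  exact ⟨⟨U σ, V σ, h₁, h₂⟩, rfl, hVσ⟩

/-- Since `Dφ_{-s}(φ_s y) = U(s)⁻¹` for the solution `U` of `U' = Df U`, its derivative along the
trajectory is `-U(s)⁻¹ Df`; adding the derivative of `h ∘ φ_s` gives the bracket. -/
theorem IsFlowOn.hasDerivAt_AdC (hM : IsOpen M) (hf : ContDiffOn ℝ 2 f M)
    (hφ : IsFlowOn M f φ) {h : 𝔼 → 𝔼} (hh : ContDiffOn ℝ 1 h M) {x : 𝔼} (hx : x ∈ M) :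
    ∃ δ > (0 : ℝ), ∃ ρ > (0 : ℝ), closedBall x ρ ⊆ M ∧ ∀ y ∈ closedBall x ρ, ∀ s, |s| < δ →
      DifferentiableAt ℝ (φ (-s)) (φ s y) ∧
      HasDerivAt (fun σ ↦ AdC (φ σ) (φ (-σ)) h y) (AdC (φ s) (φ (-s)) (lieBr f h) y) s := by
  obtain ⟨δ, hδ, ρ, hρ, hρM, hUinv⟩ := hφ.exists_variational_inv_hasFDerivAt hM hf hx
  refine ⟨δ, hδ, ρ, hρ, hρM, fun y hy s hs ↦ ?_⟩
  have hyM : y ∈ M := hρM hy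
  obtain ⟨U, hU⟩ := hUinv y hy
  obtain ⟨hUs, u, hu, hus⟩ := hU s hs
  refine ⟨hus.differentiableAt, ?_⟩
  have hAd : (fun σ ↦ Ring.inverse (U σ) (h (φ σ y))) =ᶠ[𝓝 s]
      fun σ ↦ AdC (φ σ) (φ (-σ)) h y := by
    filter_upwards [isOpen_lt continuous_abs continuous_const |>.mem_nhds hs] with σ hσ
    obtain ⟨-, u', hu', hu'σ⟩ := hU σ hσ
    simp only [AdC, hu'σ.fderiv, ← hu', Ring.inverse_unit]
  have hhφ : HasDerivAt (fun σ ↦ h (φ σ y)) (fderiv ℝ h (φ s y) (f (φ s y))) s :=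
    ((hh.differentiableOn one_ne_zero).differentiableAt
      (hM.mem_nhds ((hφ y hyM).2 s).1)).hasFDerivAt.comp_hasDerivAt s ((hφ y hyM).2 s).2
  refine ((hUs.ringInverse hu.symm).clm_apply hhφ).congr_of_eventuallyEq hAd.symm
    |>.congr_deriv ?_
  have hcomp : (fderiv ℝ f (φ s y)).comp (U s) = fderiv ℝ f (φ s y) * ↑u := by rw [← hu]; rfl
  have hinv : Ring.inverse (U s) = ↑u⁻¹ := by rw [← hu, Ring.inverse_unit]
  rw [hcomp, mul_assoc, mul_assoc, u.mul_inv, mul_one, hinv]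
  simp only [AdC, hus.fderiv, lieBr, neg_apply, mul_apply_eq_comp, map_sub]
  abel

theorem IsFlowOn.AdC_zero (hM : IsOpen M) (hφ : IsFlowOn M f φ) (h : 𝔼 → 𝔼) {y : 𝔼}
    (hy : y ∈ M) : AdC (φ 0) (φ (-0)) h y = h y := by
  simp [AdC, (hφ y hy).1, (hφ.apply_zero_eventuallyEq hM hy).fderiv_eq]

theorem IsFlowOn.AdC_eq_self_of_lieBr_eq_zero (hM : IsOpen M) (hf : ContDiffOn ℝ 2 f M)
    (hφ : IsFlowOn M f φ) {h : 𝔼 → 𝔼} (hh : ContDiffOn ℝ 1 h M)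
    (hfh : ∀ z ∈ M, lieBr f h z = 0) {x : 𝔼} (hx : x ∈ M) :
    ∃ δ > (0 : ℝ), ∃ ρ > (0 : ℝ), ∀ y ∈ closedBall x ρ, ∀ s, |s| < δ →
      DifferentiableAt ℝ (φ (-s)) (φ s y) ∧ AdC (φ s) (φ (-s)) h y = h y := by
  obtain ⟨δ, hδ, ρ, hρ, hρM, hAd⟩ := hφ.hasDerivAt_AdC hM hf hh hx
  refine ⟨δ, hδ, ρ, hρ, fun y hy s hs ↦ ⟨(hAd y hy s hs).1, ?_⟩⟩
  have hyM : y ∈ M := hρM hy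
  have hderiv : ∀ σ ∈ Ioo (-δ) δ,
      HasDerivAt (fun σ ↦ AdC (φ σ) (φ (-σ)) h y) 0 σ := fun σ hσ ↦ by
    simpa [AdC, hfh _ ((hφ y hyM).2 σ).1] using (hAd y hy σ (abs_lt.2 hσ)).2
  have hconst := isOpen_Ioo.is_const_of_deriv_eq_zero isPreconnected_Ioo
    (fun σ hσ ↦ (hderiv σ hσ).differentiableAt.differentiableWithinAt)
    (fun σ hσ ↦ (hderiv σ hσ).deriv) (abs_lt.1 hs) (show (0 : ℝ) ∈ Ioo (-δ) δ by simpa)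
  exact hconst.trans (hφ.AdC_zero hM h hyM)

theorem IsFlowOn.lieBr_eq_zero_of_eventually_AdC_eq (hM : IsOpen M) (hf : ContDiffOn ℝ 2 f M)
    (hφ : IsFlowOn M f φ) {h : 𝔼 → 𝔼} (hh : ContDiffOn ℝ 1 h M) {x : 𝔼} (hx : x ∈ M)
    (hconst : ∀ᶠ σ in 𝓝 0, AdC (φ σ) (φ (-σ)) h x = h x) : lieBr f h x = 0 := by
  obtain ⟨δ, hδ, ρ, hρ, -, hAd⟩ := hφ.hasDerivAt_AdC hM hf hh hx
  have hderiv := (hAd x (mem_closedBall_self hρ.le) 0 (by simpa using hδ)).2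
  rw [hφ.AdC_zero hM _ hx] at hderiv
  exact hderiv.unique ((hasDerivAt_const 0 (h x)).congr_of_eventuallyEq hconst)

theorem ContDiffOn.lieBr {M : Set 𝔼} (hM : IsOpen M) {f g : 𝔼 → 𝔼} (hf : ContDiffOn ℝ 2 f M)
    (hg : ContDiffOn ℝ 2 g M) : ContDiffOn ℝ 1 (lieBr f g) M :=
  ((hg.fderiv_of_isOpen hM le_rfl).clm_apply (hf.of_le one_le_two)).sub
    ((hf.fderiv_of_isOpen hM le_rfl).clm_apply (hg.of_le one_le_two))

theorem AdC_congr {Φ Φ' Ψ Ψ' : 𝔼 → 𝔼} (h : 𝔼 → 𝔼) {x : 𝔼} (hΦ : Φ x = Φ' x)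
    (hΨ : Ψ =ᶠ[𝓝 (Φ x)] Ψ') : AdC Φ Ψ h x = AdC Φ' Ψ' h x := by
  simp only [AdC, hΦ ▸ hΨ.fderiv_eq, hΦ]

theorem AdC_comp {Φ₁ Ψ₁ Φ₂ Ψ₂ : 𝔼 → 𝔼} (h : 𝔼 → 𝔼) {x : 𝔼} (hΨ₁ : Ψ₁ (Φ₁ (Φ₂ x)) = Φ₂ x)
    (hd₁ : DifferentiableAt ℝ Ψ₁ (Φ₁ (Φ₂ x))) (hd₂ : DifferentiableAt ℝ Ψ₂ (Φ₂ x)) :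
    AdC (fun y ↦ Φ₁ (Φ₂ y)) (fun z ↦ Ψ₂ (Ψ₁ z)) h x = AdC Φ₂ Ψ₂ (AdC Φ₁ Ψ₁ h) x := by
  have hd₂' : DifferentiableAt ℝ Ψ₂ (Ψ₁ (Φ₁ (Φ₂ x))) := by rwa [hΨ₁]
  simp only [AdC]
  rw [show (fun z ↦ Ψ₂ (Ψ₁ z)) = Ψ₂ ∘ Ψ₁ from rfl, fderiv_comp _ hd₂' hd₁,
    ContinuousLinearMap.comp_apply, hΨ₁]

theorem lieBr_lieBr_eq_zero_of_AdC_comp_eq {f₁ f₂ : 𝔼 → 𝔼} {φ₁ φ₂ : ℝ → 𝔼 → 𝔼}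
    (hM : IsOpen M) (hf₁ : ContDiffOn ℝ 2 f₁ M) (hf₂ : ContDiffOn ℝ 2 f₂ M)
    (hφ₁ : IsFlowOn M f₁ φ₁) (hφ₂ : IsFlowOn M f₂ φ₂) {x : 𝔼} (hx : x ∈ M) {δ : ℝ}
    (hδ : 0 < δ) (hAd : ∀ s₁ s₂ : ℝ, |s₁| ≤ δ → |s₂| ≤ δ →
      AdC (fun y ↦ φ₁ s₁ (φ₂ s₂ y)) (fun z ↦ φ₂ (-s₂) (φ₁ (-s₁) z)) (lieBr f₁ f₂) x =
        lieBr f₁ f₂ x) :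
    lieBr f₁ (lieBr f₁ f₂) x = 0 ∧ lieBr f₂ (lieBr f₁ f₂) x = 0 := by
  have hH := hf₁.lieBr hM hf₂
  have hnear : ∀ᶠ σ in 𝓝 (0 : ℝ), |σ| ≤ δ := by
    filter_upwards [closedBall_mem_nhds (0 : ℝ) hδ] with σ hσ
    simpa using hσ
  have h0 : |(0 : ℝ)| ≤ δ := by simpa using hδ.le
  refine ⟨hφ₁.lieBr_eq_zero_of_eventually_AdC_eq hM hf₁ hH hx ?_,
    hφ₂.lieBr_eq_zero_of_eventually_AdC_eq hM hf₂ hH hx ?_⟩ <;>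
    filter_upwards [hnear] with σ hσ
  · rw [← hAd σ 0 hσ h0]
    refine AdC_congr _ (by rw [(hφ₂ x hx).1]) ?_
    filter_upwards [hM.mem_nhds ((hφ₁ x hx).2 σ).1] with z hz
    simp [(hφ₂ _ ((hφ₁ z hz).2 (-σ)).1).1]
  · rw [← hAd 0 σ h0 hσ]
    refine AdC_congr _ ((hφ₁ _ ((hφ₂ x hx).2 σ).1).1.symm) ?_
    filter_upwards [hM.mem_nhds ((hφ₂ x hx).2 σ).1] with z hz
    simp [(hφ₁ z hz).1]

theorem exists_AdC_comp_eq_of_lieBr_lieBr_eq_zero {f₁ f₂ : 𝔼 → 𝔼} {φ₁ φ₂ : ℝ → 𝔼 → 𝔼}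
    (hM : IsOpen M) (hf₁ : ContDiffOn ℝ 2 f₁ M) (hf₂ : ContDiffOn ℝ 2 f₂ M)
    (hφ₁ : IsFlowOn M f₁ φ₁) (hφ₂ : IsFlowOn M f₂ φ₂)
    (hbr : ∀ z ∈ M, lieBr f₁ (lieBr f₁ f₂) z = 0 ∧ lieBr f₂ (lieBr f₁ f₂) z = 0)
    {x : 𝔼} (hx : x ∈ M) :
    ∃ δ > (0 : ℝ), ∀ s₁ s₂ : ℝ, |s₁| ≤ δ → |s₂| ≤ δ →
      AdC (fun y ↦ φ₁ s₁ (φ₂ s₂ y)) (fun z ↦ φ₂ (-s₂) (φ₁ (-s₁) z)) (lieBr f₁ f₂) x =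
        lieBr f₁ f₂ x := by
  have hH := hf₁.lieBr hM hf₂
  obtain ⟨δ₁, hδ₁, ρ₁, hρ₁, h₁⟩ :=
    hφ₁.AdC_eq_self_of_lieBr_eq_zero hM hf₁ hH (fun z hz ↦ (hbr z hz).1) hx
  obtain ⟨δ₂, hδ₂, ρ₂, hρ₂, h₂⟩ :=
    hφ₂.AdC_eq_self_of_lieBr_eq_zero hM hf₂ hH (fun z hz ↦ (hbr z hz).2) hx
  obtain ⟨d, hd, hball⟩ := Metric.continuousAt_iff.1 ((hφ₂ x hx).2 0).2.continuousAt ρ₁ hρ₁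
  set δ := min (min δ₁ δ₂) d
  refine ⟨δ / 2, by positivity, fun s₁ s₂ hs₁ hs₂ ↦ ?_⟩
  have hδ : δ / 2 < δ := half_lt_self (by positivity)
  have hs₂x : φ₂ s₂ x ∈ closedBall x ρ₁ := by
    have hdist := hball (x := s₂)
      (by rw [dist_zero_right, Real.norm_eq_abs]; linarith [min_le_right (min δ₁ δ₂) d])
    rw [(hφ₂ x hx).1] at hdist
    exact hdist.le
  obtain ⟨hd₁, hAd₁⟩ := h₁ _ hs₂x s₁ (by linarith [min_le_left δ₁ δ₂, min_le_left (min δ₁ δ₂) d])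
  obtain ⟨hd₂, hAd₂⟩ := h₂ x (mem_closedBall_self hρ₂.le) s₂
    (by linarith [min_le_right δ₁ δ₂, min_le_left (min δ₁ δ₂) d])
  rw [AdC_comp _ (hφ₁.apply_neg_apply hM (hf₁.of_le one_le_two) ((hφ₂ x hx).2 s₂).1 s₁) hd₁ hd₂]
  calc _ = AdC (φ₂ s₂) (φ₂ (-s₂)) (lieBr f₁ f₂) x := by simp only [AdC] at hAd₁ ⊢; rw [hAd₁]
    _ = lieBr f₁ f₂ x := hAd₂

end Flow

theorem stmt3 {n : ℕ} (M : Set (EuclideanSpace ℝ (Fin n))) (hM : IsOpen M)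
    (f₁ f₂ : EuclideanSpace ℝ (Fin n) → EuclideanSpace ℝ (Fin n))
    (hf₁ : ContDiffOn ℝ 2 f₁ M) (hf₂ : ContDiffOn ℝ 2 f₂ M)
    (φ₁ φ₂ : ℝ → EuclideanSpace ℝ (Fin n) → EuclideanSpace ℝ (Fin n))
    (hφ₁ : IsFlowOn M f₁ φ₁) (hφ₂ : IsFlowOn M f₂ φ₂) :
    (∀ x ∈ M, ∃ δ > (0 : ℝ), ∀ s₁ s₂ : ℝ, |s₁| ≤ δ → |s₂| ≤ δ →
        AdC (fun y => φ₁ s₁ (φ₂ s₂ y)) (fun z => φ₂ (-s₂) (φ₁ (-s₁) z))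
            (lieBr f₁ f₂) x = lieBr f₁ f₂ x)
      ↔ (∀ x ∈ M, lieBr f₁ (lieBr f₁ f₂) x = 0 ∧ lieBr f₂ (lieBr f₁ f₂) x = 0) := by
  refine ⟨fun hAd x hx ↦ ?_, fun hbr x hx ↦
    exists_AdC_comp_eq_of_lieBr_lieBr_eq_zero hM hf₁ hf₂ hφ₁ hφ₂ hbr hx⟩
  obtain ⟨δ, hδ, hAdx⟩ := hAd x hx
  exact lieBr_lieBr_eq_zero_of_AdC_comp_eq hM hf₁ hf₂ hφ₁ hφ₂ hx hδ hAdx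
end

section
/- There exist C^∞ vector fields f₁, f₂, f₃ on ℝ² (namely the linear fields with matrices A₁ = [[0,0],[1,0]], A₂ = [[0,1],[0,0]], A₃ = [[1,0],[0,0]]) such that the iterated Lie bracket [[f₁,f₂],f₃] vanishes identically, yet the multiflow Ψ(t₁,t₂,t₃) := Ψ₀(t₁,t₂) e^{t₃f₃} Ψ₀(t₁,t₂)⁻¹ e^{-t₃f₃}, where Ψ₀(t₁,t₂) = e^{t₁f₁}e^{t₂f₂}e^{-t₁f₁}e^{-t₂f₂}, is not the identity map for some (t₁,t₂,t₃). -/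
open NormedSpace

/-!
The bracket `[A₁, A₂] = diag(-1, 1)` commutes with `A₃`, but the group commutator of the flows
does not: at `t₁ = t₂ = 1` its matrix is `P₀ = !![3, 1; -1, 0]`, which is not diagonal and so does
not commute with `e^{t₃A₃} = diag(e^{t₃}, 1)`. Since the multiflow has matrix
`e^{-t₃A₃} P₀⁻¹ e^{t₃A₃} P₀`, it is not the identity; it sends `(1, 0)` to `(e^{-t₃}, 3(e^{t₃} - 1))`.
-/

theorem NormedSpace.exp_eq_isNilpotent_exp {𝔸 : Type*} [Ring 𝔸] [Algebra ℚ 𝔸] [TopologicalSpace 𝔸]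
    [IsTopologicalRing 𝔸] {a : 𝔸} (ha : IsNilpotent a) : exp a = IsNilpotent.exp a := by
  obtain ⟨k, hk⟩ := ha
  rw [exp_eq_tsum_rat, IsNilpotent.exp_eq_sum hk]
  refine tsum_eq_sum fun n hn ↦ ?_
  rw [pow_eq_zero_of_le (by simpa using hn) hk, smul_zero]

theorem NormedSpace.exp_eq_one_add_of_sq_eq_zero {𝔸 : Type*} [Ring 𝔸] [Algebra ℚ 𝔸]
    [TopologicalSpace 𝔸] [IsTopologicalRing 𝔸] {a : 𝔸} (ha : a ^ 2 = 0) : exp a = 1 + a := by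
  simp [exp_eq_isNilpotent_exp ⟨2, ha⟩, IsNilpotent.exp_eq_sum ha, Finset.sum_range_succ]

theorem Matrix.exp_smul_lower_shear (t : ℝ) : exp (t • !![0, 0; 1, 0]) = !![1, 0; t, (1 : ℝ)] := by
  rw [exp_eq_one_add_of_sq_eq_zero]
  · ext i j; fin_cases i <;> fin_cases j <;> simp
  · simp [sq, ← Matrix.ext_iff, Fin.forall_fin_two]

theorem Matrix.exp_smul_upper_shear (t : ℝ) : exp (t • !![0, 1; 0, 0]) = !![1, t; 0, (1 : ℝ)] := by
  rw [exp_eq_one_add_of_sq_eq_zero]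
  · ext i j; fin_cases i <;> fin_cases j <;> simp
  · simp [sq, ← Matrix.ext_iff, Fin.forall_fin_two]

theorem Matrix.exp_smul_diag_one_zero (t : ℝ) :
    exp (t • !![1, 0; 0, (0 : ℝ)]) = !![Real.exp t, 0; 0, 1] := by
  have : t • !![1, 0; 0, (0 : ℝ)] = Matrix.diagonal ![t, 0] := by
    ext i j; fin_cases i <;> fin_cases j <;> simp
  rw [this, Matrix.exp_diagonal, Pi.exp_def]
  ext i j; fin_cases i <;> fin_cases j <;> simp [← Real.exp_eq_exp_ℝ]

theorem stmt16 :
    ∃ A₁ A₂ A₃ : Matrix (Fin 2) (Fin 2) ℝ,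
      A₁ = !![0, 0; 1, 0] ∧ A₂ = !![0, 1; 0, 0] ∧ A₃ = !![1, 0; 0, 0] ∧
      -- the iterated Lie bracket [[f₁,f₂],f₃] vanishes identically:
      (A₁ * A₂ - A₂ * A₁) * A₃ - A₃ * (A₁ * A₂ - A₂ * A₁) = 0 ∧
      -- yet the multiflow Ψ₀ e^{t₃f₃} Ψ₀⁻¹ e^{-t₃f₃} is not the identity map
      -- (flows act on the left: the matrix of Ψ₀ = e^{t₁f₁}e^{t₂f₂}e^{-t₁f₁}e^{-t₂f₂}
      -- is P₀ = e^{-t₂A₂}e^{-t₁A₁}e^{t₂A₂}e^{t₁A₁}, and its inverse is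
      -- P₀' = e^{-t₁A₁}e^{-t₂A₂}e^{t₁A₁}e^{t₂A₂}):
      ∃ (t₁ t₂ t₃ : ℝ) (v : Fin 2 → ℝ),
        (exp ((-t₃) • A₃) *
            (exp ((-t₁) • A₁) * exp ((-t₂) • A₂) * exp (t₁ • A₁) * exp (t₂ • A₂)) *
            exp (t₃ • A₃) *
            (exp ((-t₂) • A₂) * exp ((-t₁) • A₁) * exp (t₂ • A₂) * exp (t₁ • A₁))).mulVec v
          ≠ v := by
  refine ⟨_, _, _, rfl, rfl, rfl, ?_, 1, 1, 1, ![1, 0], ?_⟩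
  · simp [← Matrix.ext_iff, Fin.forall_fin_two]
  simp only [Matrix.exp_smul_lower_shear, Matrix.exp_smul_upper_shear,
    Matrix.exp_smul_diag_one_zero]
  intro h
  have h0 : Real.exp (-1) = 1 := by simpa using congrFun h 0
  exact absurd (Real.exp_eq_one_iff _ |>.mp h0) (by norm_num)
end

section
/- Let f₁, f₂, f₃ be smooth vector fields on an open set M ⊆ ℝⁿ and suppose [f₁,[f₁,f₂]] ≡ 0 and [f₂,[f₁,f₂]] ≡ 0 on M. Then for all sufficiently small (t₁,s₃,s₁,s₂), the degree-3 integrating bracket satisfies [[f₁,f₂],f₃]^{(t₁,s₃,s₁,s₂)} = Ad_{exp(s₃f₃)∘Ψ(t₁,s₂)}[[f₁,f₂],f₃], where Ψ(t₁,s₂) = exp(t₁f₁)exp(s₂f₂)exp(-t₁f₁)exp(-s₂f₂). -/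
/-- `Ψ(t₁,s₂) = e^{t₁f₁}e^{s₂f₂}e^{-t₁f₁}e^{-s₂f₂}` (left-acting). -/
def Psi2 {n : ℕ} (φ₁ φ₂ : ℝ → EuclideanSpace ℝ (Fin n) → EuclideanSpace ℝ (Fin n))
    (t₁ t₂ : ℝ) (x : EuclideanSpace ℝ (Fin n)) : EuclideanSpace ℝ (Fin n) :=
  φ₂ (-t₂) (φ₁ (-t₁) (φ₂ t₂ (φ₁ t₁ x)))

/-- The inverse diffeomorphism `Ψ(t₁,t₂)⁻¹`. -/
def Psi2Inv {n : ℕ} (φ₁ φ₂ : ℝ → EuclideanSpace ℝ (Fin n) → EuclideanSpace ℝ (Fin n))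
    (t₁ t₂ : ℝ) (x : EuclideanSpace ℝ (Fin n)) : EuclideanSpace ℝ (Fin n) :=
  φ₁ (-t₁) (φ₂ (-t₂) (φ₁ t₁ (φ₂ t₂ x)))

open Set Metric Filter Topology Asymptotics
open scoped NNReal

variable {E F G : Type*} [NormedAddCommGroup E] [NormedSpace ℝ E]
  [NormedAddCommGroup F] [NormedSpace ℝ F] [NormedAddCommGroup G] [NormedSpace ℝ G]

theorem IsIntegralCurve.eq_of_contDiffOn {M : Set E} (hM : IsOpen M) {f : E → E}
    (hf : ContDiffOn ℝ 1 f M) {α β : ℝ → E} (hα : IsIntegralCurve α fun _ => f)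
    (hβ : IsIntegralCurve β fun _ => f) (hαM : ∀ t, α t ∈ M) {t₀ : ℝ} (h : α t₀ = β t₀) :
    α = β := by
  have hopen : IsOpen {t | α t = β t} := by
    refine isOpen_iff_mem_nhds.2 fun t (ht : α t = β t) => ?_
    obtain ⟨K, s, hs, hlip⟩ := (hf.contDiffAt (hM.mem_nhds (hαM t))).exists_lipschitzOnWith
    have hαs : ∀ᶠ τ in 𝓝 t, α τ ∈ s := hα.continuous.continuousAt.preimage_mem_nhds hs
    have hβs : ∀ᶠ τ in 𝓝 t, β τ ∈ s := hβ.continuous.continuousAt.preimage_mem_nhds (ht ▸ hs)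
    exact ODE_solution_unique_of_eventually (v := fun _ => f) (s := fun _ => s)
      (.of_forall fun _ => hlip) (hαs.mono fun τ hτ => ⟨hα τ, hτ⟩)
      (hβs.mono fun τ hτ => ⟨hβ τ, hτ⟩) ht
  have := IsClopen.eq_univ ⟨isClosed_eq hα.continuous hβ.continuous, hopen⟩ ⟨t₀, h⟩
  exact funext fun t => this.symm.subset (mem_univ t)

/-- `IsFlowOn`, for a general real normed space in place of `EuclideanSpace ℝ (Fin n)`. -/
def FlowOn (M : Set E) (f : E → E) (φ : ℝ → E → E) : Prop :=
  ∀ x ∈ M, φ 0 x = x ∧ ∀ t : ℝ, φ t x ∈ M ∧ HasDerivAt (fun s => φ s x) (f (φ t x)) t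

namespace FlowOn

variable {M : Set E} {f : E → E} {φ : ℝ → E → E}

theorem apply_zero (hφ : FlowOn M f φ) {x : E} (hx : x ∈ M) : φ 0 x = x :=
  (hφ x hx).1

theorem mem (hφ : FlowOn M f φ) {x : E} (hx : x ∈ M) (t : ℝ) : φ t x ∈ M :=
  ((hφ x hx).2 t).1

theorem isIntegralCurve (hφ : FlowOn M f φ) {x : E} (hx : x ∈ M) :
    IsIntegralCurve (φ · x) fun _ => f :=
  fun t => ((hφ x hx).2 t).2

theorem add_apply (hM : IsOpen M) (hf : ContDiffOn ℝ 1 f M) (hφ : FlowOn M f φ) {x : E}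
    (hx : x ∈ M) (s t : ℝ) : φ (s + t) x = φ s (φ t x) := by
  have hshift : IsIntegralCurve (fun s => φ (s + t) x) fun _ => f :=
    (hφ.isIntegralCurve hx).comp_add t
  refine congrFun (hshift.eq_of_contDiffOn hM hf (hφ.isIntegralCurve (hφ.mem hx t))
    (fun s => hφ.mem hx _) (t₀ := 0) ?_) s
  simp [hφ.apply_zero (hφ.mem hx t)]

theorem neg_apply_apply (hM : IsOpen M) (hf : ContDiffOn ℝ 1 f M) (hφ : FlowOn M f φ) {x : E}
    (hx : x ∈ M) (t : ℝ) : φ (-t) (φ t x) = x := by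
  rw [← hφ.add_apply hM hf hx, neg_add_cancel, hφ.apply_zero hx]

theorem neg (hφ : FlowOn M f φ) : FlowOn M (-f) fun t => φ (-t) := by
  refine fun x hx => ⟨by simpa using hφ.apply_zero hx, fun t => ⟨hφ.mem hx _, ?_⟩⟩
  simpa [Function.comp_def] using (hφ.isIntegralCurve hx (-t)).scomp t (hasDerivAt_neg t)

end FlowOn

/-- `X` and `Y` are `Φ`-related at `x`. Stated with `HasFDerivAt` rather than `fderiv`, so that it
includes the differentiability of `Φ` at `x`. -/
def IsFRelatedAt (Φ : E → F) (X : E → E) (Y : F → F) (x : E) : Prop :=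
  ∃ L : E →L[ℝ] F, HasFDerivAt Φ L x ∧ L (X x) = Y (Φ x)

namespace IsFRelatedAt

variable {Φ : E → F} {Ψ : F → G} {X : E → E} {Y : F → F} {Z : G → G} {x : E}

theorem comp (hΨ : IsFRelatedAt Ψ Y Z (Φ x)) (hΦ : IsFRelatedAt Φ X Y x) :
    IsFRelatedAt (Ψ ∘ Φ) X Z x := by
  obtain ⟨L, hL, hLX⟩ := hΦ
  obtain ⟨L', hL', hL'Y⟩ := hΨ
  exact ⟨L'.comp L, hL'.comp x hL, by rw [ContinuousLinearMap.comp_apply, hLX, hL'Y]; rfl⟩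

theorem congr_of_eventuallyEq {Φ' : E → F} (hΦ : IsFRelatedAt Φ X Y x) (h : Φ =ᶠ[𝓝 x] Φ') :
    IsFRelatedAt Φ' X Y x := by
  obtain ⟨L, hL, hLX⟩ := hΦ
  exact ⟨L, hL.congr_of_eventuallyEq h.symm, h.eq_of_nhds ▸ hLX⟩

theorem fderiv_apply (hΦ : IsFRelatedAt Φ X Y x) : fderiv ℝ Φ x (X x) = Y (Φ x) := by
  obtain ⟨L, hL, hLX⟩ := hΦ
  rw [hL.fderiv, hLX]

end IsFRelatedAt

theorem gronwallBound_zero_eq_mul (K ε x : ℝ) :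
    gronwallBound 0 K ε x = ε * gronwallBound 0 K 1 x := by
  unfold gronwallBound
  split_ifs <;> ring

theorem IsIntegralCurve.mem_closedBall_of_norm_lt {γ : ℝ → E} {v : E → E} {C T : ℝ}
    (hC : 0 ≤ C) (hγ : IsIntegralCurve γ fun _ => v)
    (hv : ∀ x ∈ closedBall (γ 0) (C * T), ‖v x‖ < C) {t : ℝ} (ht : t ∈ Icc 0 T) :
    γ t ∈ closedBall (γ 0) (C * T) := by
  have hlin : ∀ τ ∈ Icc 0 T, ‖γ τ - γ 0‖ ≤ C * τ := by
    refine image_norm_le_of_norm_deriv_right_lt_deriv_boundary (f := fun τ => γ τ - γ 0)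
      (hγ.continuous.sub continuous_const).continuousOn
      (fun τ _ => ((hγ τ).sub_const (γ 0)).hasDerivWithinAt) (by simp)
      (fun τ => (hasDerivAt_id τ).const_mul C) fun τ hτ hτeq => ?_
    refine (mul_one C).symm ▸ hv _ ?_
    rw [mem_closedBall, dist_eq_norm, hτeq]
    exact mul_le_mul_of_nonneg_left hτ.2.le hC
  rw [mem_closedBall, dist_eq_norm]
  exact (hlin t ht).trans (mul_le_mul_of_nonneg_left ht.2 hC)

theorem norm_sub_sub_fderiv_le_of_lipschitzOnWith {f : E → F} {s : Set E} {K : ℝ≥0}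
    (hs : Convex ℝ s) (hf : ∀ x ∈ s, DifferentiableAt ℝ f x)
    (hlip : LipschitzOnWith K (fderiv ℝ f) s) {a b : E} (ha : a ∈ s) (hb : b ∈ s) :
    ‖f b - f a - fderiv ℝ f a (b - a)‖ ≤ K * ‖b - a‖ ^ 2 := by
  have hseg : segment ℝ a b ⊆ s := hs.segment_subset ha hb
  have hbound : ∀ u ∈ segment ℝ a b, ‖fderiv ℝ f u - fderiv ℝ f a‖ ≤ K * ‖b - a‖ := by
    intro u hu
    rw [← dist_eq_norm, ← dist_eq_norm b]
    refine (hlip.dist_le_mul u (hseg hu) a ha).trans (mul_le_mul_of_nonneg_left ?_ K.2)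
    rw [dist_comm u, dist_comm b, ← dist_add_dist_of_mem_segment hu]
    exact le_add_of_nonneg_right dist_nonneg
  have := (convex_segment a b).norm_image_sub_le_of_norm_hasFDerivWithin_le'
    (fun u hu => (hf u (hseg hu)).hasFDerivAt.hasFDerivWithinAt) hbound
    (left_mem_segment ℝ a b) (right_mem_segment ℝ a b)
  rwa [mul_assoc, ← sq] at this

section LinearODE

variable {A : ℝ → E →L[ℝ] E} {K : ℝ≥0} {T : ℝ}

theorem exists_hasDerivWithinAt_comp_of_norm_le [CompleteSpace E] (hT : 0 ≤ T)
    (hA : ContinuousOn A (Icc 0 T)) (hAK : ∀ t ∈ Icc 0 T, ‖A t‖ ≤ K) (hKT : 2 * K * T ≤ 1) :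
    ∃ W : ℝ → E →L[ℝ] E, W 0 = ContinuousLinearMap.id ℝ E ∧
      ∀ t ∈ Icc 0 T, HasDerivWithinAt W ((A t).comp (W t)) (Icc 0 T) t ∧ ‖W t‖ ≤ 3 := by
  have hpl : IsPicardLindelof (fun t (P : E →L[ℝ] E) => (A t).comp P)
      (tmin := 0) (tmax := T) ⟨0, le_rfl, hT⟩ (ContinuousLinearMap.id ℝ E) 1 0 (2 * K) K := by
    refine ⟨fun t ht => ?_, fun P _ => ?_, fun t ht P hP => ?_, ?_⟩
    · refine LipschitzWith.lipschitzOnWith (LipschitzWith.of_dist_le_mul fun P Q => ?_)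
      rw [dist_eq_norm, dist_eq_norm, ← ContinuousLinearMap.comp_sub]
      exact (ContinuousLinearMap.opNorm_comp_le _ _).trans
        (mul_le_mul_of_nonneg_right (hAK t ht) (norm_nonneg _))
    · exact ((ContinuousLinearMap.compL ℝ E E E).flip P).continuous.comp_continuousOn hA
    · have hP2 : ‖P‖ ≤ 2 := by
        have := norm_le_norm_add_norm_sub' P (ContinuousLinearMap.id ℝ E)
        rw [← dist_eq_norm] at this
        have hP1 : dist P (ContinuousLinearMap.id ℝ E) ≤ 1 := by simpa using hP
        linarith [ContinuousLinearMap.norm_id_le (𝕜 := ℝ) (E := E)]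
      calc ‖(A t).comp P‖ ≤ K * 2 :=
            (ContinuousLinearMap.opNorm_comp_le _ _).trans (mul_le_mul (hAK t ht) hP2
              (norm_nonneg _) K.2)
        _ = ↑(2 * K) := by push_cast; ring
    · simp [max_eq_left hT, hKT]
  obtain ⟨W, hW0, hW⟩ := hpl.exists_eq_forall_mem_Icc_hasDerivWithinAt₀
  refine ⟨W, hW0, fun t ht => ⟨hW t ht, ?_⟩⟩
  have hgron := norm_le_gronwallBound_of_norm_deriv_right_le (δ := 1) (ε := 0)
    (fun τ hτ => (hW τ hτ).continuousWithinAt)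
    (fun τ hτ => (hW τ (Ico_subset_Icc_self hτ)).mono_of_mem_nhdsWithin
      (Icc_mem_nhdsGE_of_mem hτ))
    (by rw [show W 0 = _ from hW0]; exact ContinuousLinearMap.norm_id_le)
    (fun τ hτ => by
      rw [add_zero]
      exact (ContinuousLinearMap.opNorm_comp_le _ _).trans
        (mul_le_mul_of_nonneg_right (hAK τ (Ico_subset_Icc_self hτ)) (norm_nonneg _)))
    t ht
  rw [sub_zero, gronwallBound_ε0, one_mul] at hgron
  -- the constant `3`: `‖W t‖ ≤ exp (K t) ≤ exp 1 < 3`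
  have hKt : (K : ℝ) * t ≤ 1 := by nlinarith [K.2, ht.1, ht.2]
  linarith [Real.exp_le_exp.2 hKt, Real.exp_one_lt_d9]

theorem eqOn_of_hasDerivWithinAt_apply (hAK : ∀ t ∈ Icc 0 T, ‖A t‖ ≤ K) {u v : ℝ → E}
    (hu : ∀ t ∈ Icc 0 T, HasDerivWithinAt u (A t (u t)) (Icc 0 T) t)
    (hv : ∀ t ∈ Icc 0 T, HasDerivWithinAt v (A t (v t)) (Icc 0 T) t) (h0 : u 0 = v 0) :
    EqOn u v (Icc 0 T) :=
  ODE_solution_unique_of_mem_Icc_right (v := fun t => A t) (s := fun _ => univ) (K := K)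
    (fun t ht => ((A t).lipschitz.weaken (mod_cast hAK t (Ico_subset_Icc_self ht))).lipschitzOnWith)
    (fun t ht => (hu t ht).continuousWithinAt)
    (fun t ht => (hu t (Ico_subset_Icc_self ht)).mono_of_mem_nhdsWithin (Icc_mem_nhdsGE_of_mem ht))
    (fun _ _ => mem_univ _)
    (fun t ht => (hv t ht).continuousWithinAt)
    (fun t ht => (hv t (Ico_subset_Icc_self ht)).mono_of_mem_nhdsWithin (Icc_mem_nhdsGE_of_mem ht))
    (fun _ _ => mem_univ _) h0

end LinearODE

section FlowDerivative

variable {M : Set E} {f : E → E} {φ : ℝ → E → E}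

theorem FlowOn.dist_le_of_norm_lt (hφ : FlowOn M f φ) {x : E} (hx : x ∈ M) {C T : ℝ}
    (hC : 0 ≤ C) (hfC : ∀ y ∈ closedBall x (C * T), ‖f y‖ < C) {t : ℝ} (ht : t ∈ Icc 0 T) :
    dist (φ t x) x ≤ C * T := by
  have := (hφ.isIntegralCurve hx).mem_closedBall_of_norm_lt hC
    (by rwa [hφ.apply_zero hx]) ht
  rwa [hφ.apply_zero hx, mem_closedBall] at this

theorem FlowOn.hasFDerivAt_of_variational (hφ : FlowOn M f φ) {w : E} (hwM : M ∈ 𝓝 w)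
    {B : Set E} (hB : Convex ℝ B) (hfB : ∀ x ∈ B, DifferentiableAt ℝ f x) {K K₂ : ℝ≥0}
    (hfK : LipschitzOnWith K f B) (hDfK₂ : LipschitzOnWith K₂ (fderiv ℝ f) B)
    {t c : ℝ} (ht : 0 ≤ t) {W : ℝ → E →L[ℝ] E} (hW0 : W 0 = ContinuousLinearMap.id ℝ E)
    (hW : ∀ τ ∈ Icc 0 t, HasDerivWithinAt W ((fderiv ℝ f (φ τ w)).comp (W τ)) (Icc 0 t) τ)
    (hWc : ∀ τ ∈ Icc 0 t, ‖W τ‖ ≤ c)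
    (hstay : ∀ᶠ h in 𝓝 0, ∀ τ ∈ Icc 0 t, φ τ (w + h) ∈ B ∧ φ τ w + W τ h ∈ B) :
    HasFDerivAt (φ t) (W t) w := by
  have hw : w ∈ M := mem_of_mem_nhds hwM
  have hwhM : ∀ᶠ h in 𝓝 (0 : E), w + h ∈ M :=
    (continuous_const.add continuous_id).tendsto' 0 w (add_zero w) hwM
  have hφwB : ∀ τ ∈ Icc 0 t, φ τ w ∈ B := fun τ hτ => by
    simpa using (hstay.self_of_nhds τ hτ).1
  have hquad : ∀ᶠ h in 𝓝 (0 : E), ‖φ t (w + h) - φ t w - W t h‖ ≤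
      K₂ * c ^ 2 * gronwallBound 0 K 1 t * ‖‖h‖ ^ 2‖ := by
    filter_upwards [hstay, hwhM] with h hB' hwh
    -- compare the exact trajectory from `w + h` with its linearisation along the one from `w`
    have hlin : ∀ τ ∈ Ico 0 t, HasDerivWithinAt (fun σ => φ σ w + W σ h)
        (f (φ τ w) + (fderiv ℝ f (φ τ w)).comp (W τ) h) (Ici τ) τ := fun τ hτ =>
      (hφ.isIntegralCurve hw τ).hasDerivWithinAt.add
        ((ContinuousLinearMap.apply ℝ E h).hasFDerivAt.comp_hasDerivWithinAt τ
          ((hW τ (Ico_subset_Icc_self hτ)).mono_of_mem_nhdsWithin (Icc_mem_nhdsGE_of_mem hτ)))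
    have herr : ∀ τ ∈ Ico 0 t, dist (f (φ τ w) + (fderiv ℝ f (φ τ w)).comp (W τ) h)
        (f (φ τ w + W τ h)) ≤ K₂ * (c * ‖h‖) ^ 2 := by
      intro τ hτ
      have hτ' := Ico_subset_Icc_self hτ
      have hWh : ‖W τ h‖ ≤ c * ‖h‖ :=
        ((W τ).le_opNorm h).trans (mul_le_mul_of_nonneg_right (hWc τ hτ') (norm_nonneg h))
      have := norm_sub_sub_fderiv_le_of_lipschitzOnWith hB hfB hDfK₂ (hφwB τ hτ') (hB' τ hτ').2
      rw [add_sub_cancel_left] at this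
      rw [dist_comm, dist_eq_norm, ContinuousLinearMap.comp_apply, ← sub_sub]
      exact this.trans (mul_le_mul_of_nonneg_left
        (pow_le_pow_left₀ (norm_nonneg _) hWh 2) K₂.2)
    have hgron := dist_le_of_approx_trajectories_ODE_of_mem (v := fun _ => f)
      (s := fun _ => B) (g := fun τ => φ τ w + W τ h) (δ := 0) (fun _ _ => hfK)
      (hφ.isIntegralCurve hwh).continuous.continuousOn
      (fun τ _ => (hφ.isIntegralCurve hwh τ).hasDerivWithinAt) (fun τ _ => by rw [dist_self])
      (fun τ hτ => (hB' τ (Ico_subset_Icc_self hτ)).1)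
      ((hφ.isIntegralCurve hw).continuous.continuousOn.add
        fun τ hτ => ((hW τ hτ).continuousWithinAt.clm_apply continuousWithinAt_const))
      hlin herr (fun τ hτ => (hB' τ (Ico_subset_Icc_self hτ)).2)
      (by simp [hφ.apply_zero hwh, hφ.apply_zero hw, hW0]) t ⟨ht, le_rfl⟩
    rw [zero_add, sub_zero, gronwallBound_zero_eq_mul, dist_eq_norm, sub_add_eq_sub_sub] at hgron
    rw [norm_pow, norm_norm]
    linarith
  rw [hasFDerivAt_iff_isLittleO_nhds_zero]
  exact (IsBigO.of_bound _ hquad).trans_isLittleO (isLittleO_norm_pow_id one_lt_two)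

theorem FlowOn.variational_apply_eq {g : E → E} (hφ : FlowOn M f φ) {w : E}
    (hw : w ∈ M) (hg : ∀ x ∈ M, DifferentiableAt ℝ g x)
    (hfg : ∀ x ∈ M, fderiv ℝ g x (f x) = fderiv ℝ f x (g x)) {K : ℝ≥0} {T : ℝ}
    (hfK : ∀ τ ∈ Icc 0 T, ‖fderiv ℝ f (φ τ w)‖ ≤ K) {W : ℝ → E →L[ℝ] E}
    (hW0 : W 0 = ContinuousLinearMap.id ℝ E)
    (hW : ∀ τ ∈ Icc 0 T, HasDerivWithinAt W ((fderiv ℝ f (φ τ w)).comp (W τ)) (Icc 0 T) τ)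
    {t : ℝ} (ht : t ∈ Icc 0 T) : W t (g w) = g (φ t w) := by
  -- both sides solve `v' = Df(φ τ w) v`, the right-hand side because `[f, g] = 0`
  refine eqOn_of_hasDerivWithinAt_apply hfK (u := fun τ => W τ (g w))
    (v := fun τ => g (φ τ w)) (fun τ hτ => ?_) (fun τ hτ => ?_) ?_ ht
  · exact (ContinuousLinearMap.apply ℝ E (g w)).hasFDerivAt.comp_hasDerivWithinAt τ (hW τ hτ)
  · have hτM := hφ.mem hw τ
    have := (hg _ hτM).hasFDerivAt.comp_hasDerivAt τ (hφ.isIntegralCurve hw τ)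
    exact (hfg _ hτM ▸ this).hasDerivWithinAt
  · simp [hW0, hφ.apply_zero hw]

end FlowDerivative

namespace FlowOn

variable [CompleteSpace E] {M : Set E} {f g : E → E} {φ : ℝ → E → E}

theorem isFRelatedAt_of_mem_ball (hM : IsOpen M) (hf : ContDiffOn ℝ 2 f M)
    (hφ : FlowOn M f φ) (hg : ∀ x ∈ M, DifferentiableAt ℝ g x)
    (hfg : ∀ x ∈ M, fderiv ℝ g x (f x) = fderiv ℝ f x (g x)) {q : E} {ρ C T : ℝ}
    {K K₂ : ℝ≥0} (hBM : closedBall q (3 * ρ) ⊆ M)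
    (hfK : LipschitzOnWith K f (closedBall q (3 * ρ)))
    (hDfK₂ : LipschitzOnWith K₂ (fderiv ℝ f) (closedBall q (3 * ρ)))
    (hfC : ∀ x ∈ closedBall q (3 * ρ), ‖f x‖ < C) (hCT : C * T ≤ ρ) (hKT : 2 * K * T ≤ 1)
    {w : E} (hw : w ∈ ball q ρ) {t : ℝ} (ht : t ∈ Icc 0 T) : IsFRelatedAt (φ t) g g w := by
  have hρ : 0 < ρ := dist_nonneg.trans_lt hw
  have hC : 0 ≤ C := (norm_nonneg _).trans (hfC q (mem_closedBall_self (by positivity))).le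
  have hwq : dist w q < ρ := hw
  have hwM : w ∈ M := hBM (ball_subset_closedBall (ball_subset_ball (by linarith) hw))
  -- trajectories from `closedBall q (2ρ)` move by at most `C T ≤ ρ` up to time `T`, so they stay
  -- in `closedBall q (3ρ)`; for `‖h‖ < ρ/3` so does `φ τ w + W τ h`, as `‖W τ‖ ≤ 3`
  have hconf : ∀ x ∈ closedBall q (2 * ρ), ∀ τ ∈ Icc 0 T, dist (φ τ x) x ≤ ρ := by
    intro x hx τ hτ
    refine (hφ.dist_le_of_norm_lt (hBM (closedBall_subset_closedBall (by linarith) hx)) hC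
      (fun y hy => hfC y ?_) hτ).trans hCT
    rw [mem_closedBall] at hx hy ⊢
    linarith [dist_triangle y x q]
  have hφw : ∀ τ ∈ Icc 0 T, dist (φ τ w) q < 2 * ρ := fun τ hτ => by
    linarith [dist_triangle (φ τ w) w q, hconf w (mem_closedBall.2 (by linarith)) τ hτ]
  have hA : ContinuousOn (fun τ => fderiv ℝ f (φ τ w)) (Icc 0 T) :=
    (hf.continuousOn_fderiv_of_isOpen hM one_le_two).comp
      (hφ.isIntegralCurve hwM).continuous.continuousOn fun τ _ => hφ.mem hwM τ
  have hAK : ∀ τ ∈ Icc 0 T, ‖fderiv ℝ f (φ τ w)‖ ≤ K := fun τ hτ =>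
    norm_fderiv_le_of_lipschitzOn ℝ
      (closedBall_mem_nhds_of_mem (mem_ball.2 (by linarith [hφw τ hτ]))) hfK
  obtain ⟨W, hW0, hW⟩ := exists_hasDerivWithinAt_comp_of_norm_le (ht.1.trans ht.2) hA hAK hKT
  refine ⟨W t, ?_, hφ.variational_apply_eq hwM hg hfg hAK hW0 (fun τ hτ => (hW τ hτ).1) ht⟩
  refine hφ.hasFDerivAt_of_variational (hM.mem_nhds hwM) (convex_closedBall q (3 * ρ))
    (fun x hx => (hf.differentiableOn two_ne_zero x (hBM hx)).differentiableAt
      (hM.mem_nhds (hBM hx))) hfK hDfK₂ ht.1 hW0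
    (fun τ hτ => (hW τ ⟨hτ.1, hτ.2.trans ht.2⟩).1.mono (Icc_subset_Icc_right ht.2))
    (fun τ hτ => (hW τ ⟨hτ.1, hτ.2.trans ht.2⟩).2) ?_
  filter_upwards [ball_mem_nhds (0 : E) (by positivity : 0 < ρ / 3)] with h hh τ hτ
  have hτT : τ ∈ Icc 0 T := ⟨hτ.1, hτ.2.trans ht.2⟩
  rw [mem_ball, dist_zero_right] at hh
  have hwh : dist (w + h) q ≤ 2 * ρ := by
    linarith [dist_triangle (w + h) w q, show dist (w + h) w = ‖h‖ by simp]
  have hWh : ‖W τ h‖ ≤ 3 * ‖h‖ :=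
    ((W τ).le_opNorm h).trans (mul_le_mul_of_nonneg_right (hW τ hτT).2 (norm_nonneg h))
  constructor <;> rw [mem_closedBall]
  · linarith [dist_triangle (φ τ (w + h)) (w + h) q, hconf _ (mem_closedBall.2 hwh) τ hτT]
  · linarith [dist_triangle (φ τ w + W τ h) (φ τ w) q, hφw τ hτT,
      show dist (φ τ w + W τ h) (φ τ w) = ‖W τ h‖ by simp]

theorem exists_forall_isFRelatedAt_of_nonneg (hM : IsOpen M) (hf : ContDiffOn ℝ 2 f M)
    (hφ : FlowOn M f φ) (hg : ∀ x ∈ M, DifferentiableAt ℝ g x)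
    (hfg : ∀ x ∈ M, fderiv ℝ g x (f x) = fderiv ℝ f x (g x)) {q : E} (hq : q ∈ M) :
    ∃ r > 0, ∃ T > 0, ∀ w ∈ ball q r, ∀ t ∈ Icc 0 T, IsFRelatedAt (φ t) g g w := by
  have hqM := hM.mem_nhds hq
  obtain ⟨K, s₁, hs₁, hfK⟩ := ((hf.contDiffAt hqM).of_le one_le_two).exists_lipschitzOnWith
  obtain ⟨K₂, s₂, hs₂, hDfK₂⟩ :=
    ((hf.fderiv_of_isOpen hM le_rfl).contDiffAt hqM).exists_lipschitzOnWith
  have hfC : ∀ᶠ x in 𝓝 q, ‖f x‖ < ‖f q‖ + 1 :=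
    (hf.continuousOn.continuousAt hqM).norm.eventually (gt_mem_nhds (lt_add_one _))
  obtain ⟨ε, hε, hεU⟩ := Metric.mem_nhds_iff.1 (inter_mem (inter_mem hqM (inter_mem hs₁ hs₂)) hfC)
  have hB : closedBall q (3 * (ε / 4)) ⊆ M ∩ (s₁ ∩ s₂) ∩ {x | ‖f x‖ < ‖f q‖ + 1} :=
    (closedBall_subset_ball (by linarith)).trans hεU
  refine ⟨ε / 4, by positivity, min (ε / 4 / (‖f q‖ + 1)) (1 / (2 * K + 1)), by positivity,
    fun w hw t ht => hφ.isFRelatedAt_of_mem_ball hM hf hg hfg (fun x hx => (hB hx).1.1)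
      (hfK.mono fun x hx => (hB hx).1.2.1) (hDfK₂.mono fun x hx => (hB hx).1.2.2)
      (fun x hx => (hB hx).2) ?_ ?_ hw ht⟩
  · calc (‖f q‖ + 1) * min (ε / 4 / (‖f q‖ + 1)) (1 / (2 * K + 1))
        ≤ (‖f q‖ + 1) * (ε / 4 / (‖f q‖ + 1)) := by gcongr; exact min_le_left _ _
      _ = ε / 4 := by field_simp
  · calc 2 * K * min (ε / 4 / (‖f q‖ + 1)) (1 / (2 * K + 1))
        ≤ 2 * K * (1 / (2 * K + 1)) := by gcongr; exact min_le_right _ _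
      _ ≤ 1 := by rw [mul_one_div, div_le_one (by positivity)]; linarith

theorem exists_forall_isFRelatedAt (hM : IsOpen M) (hf : ContDiffOn ℝ 2 f M)
    (hφ : FlowOn M f φ) (hg : ∀ x ∈ M, DifferentiableAt ℝ g x)
    (hfg : ∀ x ∈ M, fderiv ℝ g x (f x) = fderiv ℝ f x (g x)) {q : E} (hq : q ∈ M) :
    ∃ r > 0, ∃ T > 0, ∀ w ∈ ball q r, ∀ t, |t| ≤ T → IsFRelatedAt (φ t) g g w := by
  obtain ⟨r₁, hr₁, T₁, hT₁, hrel₁⟩ := hφ.exists_forall_isFRelatedAt_of_nonneg hM hf hg hfg hq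
  have hfg' : ∀ x ∈ M, fderiv ℝ g x ((-f) x) = fderiv ℝ (-f) x (g x) := fun x hx => by
    simp [fderiv_neg, hfg x hx]
  obtain ⟨r₂, hr₂, T₂, hT₂, hrel₂⟩ :=
    hφ.neg.exists_forall_isFRelatedAt_of_nonneg hM hf.neg hg hfg' hq
  refine ⟨min r₁ r₂, lt_min hr₁ hr₂, min T₁ T₂, lt_min hT₁ hT₂, fun w hw t ht => ?_⟩
  rcases le_total 0 t with h | h
  · exact hrel₁ w (ball_subset_ball (min_le_left _ _) hw) t
      ⟨h, (le_abs_self t).trans (ht.trans (min_le_left _ _))⟩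
  · simpa using hrel₂ w (ball_subset_ball (min_le_right _ _) hw) (-t)
      ⟨neg_nonneg.2 h, (neg_le_abs t).trans (ht.trans (min_le_right _ _))⟩

theorem isFRelatedAt (hM : IsOpen M) (hf : ContDiffOn ℝ 2 f M) (hφ : FlowOn M f φ)
    (hg : ∀ x ∈ M, DifferentiableAt ℝ g x)
    (hfg : ∀ x ∈ M, fderiv ℝ g x (f x) = fderiv ℝ f x (g x)) {z : E} (hz : z ∈ M) (s : ℝ) :
    IsFRelatedAt (φ s) g g z := by
  have hstep : ∀ s τ, IsFRelatedAt (φ s) g g z → IsFRelatedAt (φ τ) g g (φ s z) →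
      IsFRelatedAt (φ (τ + s)) g g z := fun s τ hs hτ =>
    (hτ.comp hs).congr_of_eventuallyEq <| (hM.eventually_mem hz).mono fun y hy =>
      (hφ.add_apply hM (hf.of_le one_le_two) hy τ s).symm
  have hloc : IsLocallyConstant fun s => IsFRelatedAt (φ s) g g z := by
    refine (IsLocallyConstant.iff_eventually_eq _).2 fun s₀ => ?_
    obtain ⟨r, hr, T, hT, hrel⟩ := hφ.exists_forall_isFRelatedAt hM hf hg hfg (hφ.mem hz s₀)
    have hnear : ∀ᶠ s in 𝓝 s₀, φ s z ∈ ball (φ s₀ z) r :=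
      (hφ.isIntegralCurve hz).continuous.continuousAt.preimage_mem_nhds (ball_mem_nhds _ hr)
    filter_upwards [hnear, closedBall_mem_nhds s₀ hT] with s hs hsT
    rw [mem_closedBall, Real.dist_eq] at hsT
    refine propext ⟨fun h => ?_, fun h => ?_⟩
    · simpa using hstep s (s₀ - s) h (hrel _ hs _ (by rwa [abs_sub_comm]))
    · simpa using hstep s₀ (s - s₀) h (hrel _ (mem_ball_self hr) _ hsT)
  have h0 : IsFRelatedAt (φ 0) g g z :=
    ⟨_, (hasFDerivAt_id z).congr_of_eventuallyEq <| (hM.eventually_mem hz).mono fun y hy =>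
      hφ.apply_zero hy, by simp [hφ.apply_zero hz]⟩
  exact hloc.apply_eq_of_isPreconnected isPreconnected_univ (mem_univ 0) (mem_univ s) ▸ h0

end FlowOn

theorem contDiffOn_lieBr {n : ℕ} {M : Set (EuclideanSpace ℝ (Fin n))} (hM : IsOpen M)
    {f g : EuclideanSpace ℝ (Fin n) → EuclideanSpace ℝ (Fin n)} (hf : ContDiffOn ℝ 2 f M)
    (hg : ContDiffOn ℝ 2 g M) : ContDiffOn ℝ 1 (lieBr f g) M :=
  ((hg.fderiv_of_isOpen hM le_rfl).clm_apply (hf.of_le one_le_two)).sub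
    ((hf.fderiv_of_isOpen hM le_rfl).clm_apply (hg.of_le one_le_two))

theorem lieBr_eq_of_eventuallyEq {n : ℕ}
    {f f' g : EuclideanSpace ℝ (Fin n) → EuclideanSpace ℝ (Fin n)} {x : EuclideanSpace ℝ (Fin n)}
    (h : f =ᶠ[𝓝 x] f') : lieBr f g x = lieBr f' g x := by
  unfold lieBr
  rw [h.fderiv_eq, h.eq_of_nhds]

theorem adC_flows_eq_of_lieBr_eq_zero {n : ℕ} {M : Set (EuclideanSpace ℝ (Fin n))}
    (hM : IsOpen M) {f₁ f₂ g : EuclideanSpace ℝ (Fin n) → EuclideanSpace ℝ (Fin n)}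
    (hf₁ : ContDiffOn ℝ 2 f₁ M) (hf₂ : ContDiffOn ℝ 2 f₂ M)
    {φ₁ φ₂ : ℝ → EuclideanSpace ℝ (Fin n) → EuclideanSpace ℝ (Fin n)} (hφ₁ : FlowOn M f₁ φ₁)
    (hφ₂ : FlowOn M f₂ φ₂) (hg : ∀ x ∈ M, DifferentiableAt ℝ g x)
    (h₁ : ∀ x ∈ M, lieBr f₁ g x = 0) (h₂ : ∀ x ∈ M, lieBr f₂ g x = 0) (s₁ s₂ : ℝ)
    {z : EuclideanSpace ℝ (Fin n)} (hz : z ∈ M) :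
    AdC (fun y => φ₁ s₁ (φ₂ s₂ y)) (fun u => φ₂ (-s₂) (φ₁ (-s₁) u)) g z = g z := by
  have hp := hφ₁.mem (hφ₂.mem hz s₂) s₁
  have h := ((hφ₂.isFRelatedAt hM hf₂ hg (fun x hx => sub_eq_zero.1 (h₂ x hx))
    (hφ₁.mem hp (-s₁)) (-s₂)).comp (hφ₁.isFRelatedAt hM hf₁ hg
      (fun x hx => sub_eq_zero.1 (h₁ x hx)) hp (-s₁))).fderiv_apply
  simpa [AdC, Function.comp_def, hφ₁.neg_apply_apply hM (hf₁.of_le one_le_two) (hφ₂.mem hz s₂),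
    hφ₂.neg_apply_apply hM (hf₂.of_le one_le_two) hz] using h

theorem stmt18_general {n : ℕ} (M : Set (EuclideanSpace ℝ (Fin n))) (hM : IsOpen M)
    (f₁ f₂ f₃ : EuclideanSpace ℝ (Fin n) → EuclideanSpace ℝ (Fin n))
    (hf₁ : ContDiffOn ℝ 3 f₁ M) (hf₂ : ContDiffOn ℝ 3 f₂ M)
    (φ₁ φ₂ φ₃ : ℝ → EuclideanSpace ℝ (Fin n) → EuclideanSpace ℝ (Fin n))
    (hφ₁ : IsFlowOn M f₁ φ₁) (hφ₂ : IsFlowOn M f₂ φ₂) (hφ₃ : IsFlowOn M f₃ φ₃)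
    -- the nilpotency hypotheses `[f₁,[f₁,f₂]] ≡ 0` and `[f₂,[f₁,f₂]] ≡ 0` on `M`
    (hnil₁ : ∀ x ∈ M, lieBr f₁ (lieBr f₁ f₂) x = 0)
    (hnil₂ : ∀ x ∈ M, lieBr f₂ (lieBr f₁ f₂) x = 0) :
    ∀ x ∈ M, ∃ δ > (0 : ℝ), ∀ t₁ s₃ s₁ s₂ : ℝ,
      |t₁| < δ → |s₃| < δ → |s₁| < δ → |s₂| < δ →
      -- the degree-3 integrating bracket `[[f₁,f₂],f₃]^{(t₁,s₃,s₁,s₂)}`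
      AdC (fun y => Psi2 φ₁ φ₂ t₁ s₂ (φ₃ s₃ y))
          (fun z => φ₃ (-s₃) (Psi2Inv φ₁ φ₂ t₁ s₂ z))
          (lieBr
            (AdC (fun y => φ₁ s₁ (φ₂ s₂ y)) (fun z => φ₂ (-s₂) (φ₁ (-s₁) z))
              (lieBr f₁ f₂))
            f₃) x
        = AdC (fun y => Psi2 φ₁ φ₂ t₁ s₂ (φ₃ s₃ y))
            (fun z => φ₃ (-s₃) (Psi2Inv φ₁ φ₂ t₁ s₂ z))
            (lieBr (lieBr f₁ f₂) f₃) x := by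
  have hf₁' : ContDiffOn ℝ 2 f₁ M := hf₁.of_le (by norm_num)
  have hf₂' : ContDiffOn ℝ 2 f₂ M := hf₂.of_le (by norm_num)
  have hg x (hx : x ∈ M) : DifferentiableAt ℝ (lieBr f₁ f₂) x :=
    ((contDiffOn_lieBr hM hf₁' hf₂').differentiableOn one_ne_zero x hx).differentiableAt
      (hM.mem_nhds hx)
  intro x hx
  refine ⟨1, one_pos, fun t₁ s₃ s₁ s₂ _ _ _ _ => ?_⟩
  have hy : Psi2 φ₁ φ₂ t₁ s₂ (φ₃ s₃ x) ∈ M :=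
    FlowOn.mem hφ₂ (FlowOn.mem hφ₁ (FlowOn.mem hφ₂ (FlowOn.mem hφ₁ (FlowOn.mem hφ₃ hx s₃) t₁)
      s₂) (-t₁)) (-s₂)
  have hAd_near : AdC (fun y => φ₁ s₁ (φ₂ s₂ y)) (fun u => φ₂ (-s₂) (φ₁ (-s₁) u))
      (lieBr f₁ f₂) =ᶠ[𝓝 (Psi2 φ₁ φ₂ t₁ s₂ (φ₃ s₃ x))] lieBr f₁ f₂ :=
    (hM.eventually_mem hy).mono fun z hz =>
      adC_flows_eq_of_lieBr_eq_zero hM hf₁' hf₂' hφ₁ hφ₂ hg hnil₁ hnil₂ s₁ s₂ hz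
  exact congrArg (fderiv ℝ _ _) (lieBr_eq_of_eventuallyEq hAd_near)

theorem stmt18 {n : ℕ} (M : Set (EuclideanSpace ℝ (Fin n))) (hM : IsOpen M)
    (f₁ f₂ f₃ : EuclideanSpace ℝ (Fin n) → EuclideanSpace ℝ (Fin n))
    (hf₁ : ContDiffOn ℝ 3 f₁ M) (hf₂ : ContDiffOn ℝ 3 f₂ M)
    (hf₃ : ContDiffOn ℝ 1 f₃ M)
    (φ₁ φ₂ φ₃ : ℝ → EuclideanSpace ℝ (Fin n) → EuclideanSpace ℝ (Fin n))
    (hφ₁ : IsFlowOn M f₁ φ₁) (hφ₂ : IsFlowOn M f₂ φ₂) (hφ₃ : IsFlowOn M f₃ φ₃)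
    -- the nilpotency hypotheses `[f₁,[f₁,f₂]] ≡ 0` and `[f₂,[f₁,f₂]] ≡ 0` on `M`
    (hnil₁ : ∀ x ∈ M, lieBr f₁ (lieBr f₁ f₂) x = 0)
    (hnil₂ : ∀ x ∈ M, lieBr f₂ (lieBr f₁ f₂) x = 0) :
    ∀ x ∈ M, ∃ δ > (0 : ℝ), ∀ t₁ s₃ s₁ s₂ : ℝ,
      |t₁| < δ → |s₃| < δ → |s₁| < δ → |s₂| < δ →
      -- the degree-3 integrating bracket `[[f₁,f₂],f₃]^{(t₁,s₃,s₁,s₂)}`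
      AdC (fun y => Psi2 φ₁ φ₂ t₁ s₂ (φ₃ s₃ y))
          (fun z => φ₃ (-s₃) (Psi2Inv φ₁ φ₂ t₁ s₂ z))
          (lieBr
            (AdC (fun y => φ₁ s₁ (φ₂ s₂ y)) (fun z => φ₂ (-s₂) (φ₁ (-s₁) z))
              (lieBr f₁ f₂))
            f₃) x
        = AdC (fun y => Psi2 φ₁ φ₂ t₁ s₂ (φ₃ s₃ y))
            (fun z => φ₃ (-s₃) (Psi2Inv φ₁ φ₂ t₁ s₂ z))
            (lieBr (lieBr f₁ f₂) f₃) x :=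
  stmt18_general M hM f₁ f₂ f₃ hf₁ hf₂ φ₁ φ₂ φ₃ hφ₁ hφ₂ hφ₃ hnil₁ hnil₂
end
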